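/- arXiv:1806.00521 — 4 statements merged into one kernel-verified Lean document; each statement's English description precedes it below -/
import Mathlib

section
/- For every fixed α with 0 < α < 1/2, the number X_N of outdegree-two vertices in a uniformly random lemniscate tree concentrates about its mean: P(|X_N − μ_N| > N^{α + 1/2}) = O(N^{α − 1/2}) as N → ∞; in particular this probability tends to 0. -/
/-!
A lemniscate tree on `N` vertices is a rooted nonplane binary tree whose vertices are
bijectively labeled `1,…,N` (here: `Fin N`, with vertex `0` playing the role of label 1)
such that labels strictly increase along every path directed away from the root.
Since children are unordered, such a tree is faithfully encoded by its parent function: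
vertex `0` is the root (it has no parent), every other vertex has a parent with strictly
smaller label, and every vertex has at most two children.
-/
def LemniscateTree (N : ℕ) : Type :=
  {f : Fin N → Option (Fin N) //
    (∀ i : Fin N, f i = none ↔ (i : ℕ) = 0) ∧
    (∀ i j : Fin N, f i = some j → (j : ℕ) < (i : ℕ)) ∧
    (∀ j : Fin N, (Finset.univ.filter fun i => f i = some j).card ≤ 2)}

instance (N : ℕ) : Fintype (LemniscateTree N) := by
  unfold LemniscateTree; infer_instance

/-- The number of vertices of outdegree two (i.e. with exactly two children). -/
def outdegTwoCount {N : ℕ} (T : LemniscateTree N) : ℕ :=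
  (Finset.univ.filter fun j : Fin N =>
    (Finset.univ.filter fun i => T.1 i = some j).card = 2).card

/-- `μ_N`: the mean number of outdegree-two vertices of a uniformly random
lemniscate tree on `N` vertices. -/
noncomputable def lemMean (N : ℕ) : ℝ :=
  (∑ T : LemniscateTree N, (outdegTwoCount T : ℝ)) / (Fintype.card (LemniscateTree N))

open scoped Classical in
/-- The probability that a uniformly random lemniscate tree on `N` vertices has
`|X_N − μ_N| > N^{α+1/2}`, where `X_N` is its number of outdegree-two vertices. -/
noncomputable def devProb (N : ℕ) (α : ℝ) : ℝ :=
  ((Finset.univ.filter fun T : LemniscateTree N =>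
      (N : ℝ) ^ (α + 1 / 2) < |(outdegTwoCount T : ℝ) - lemMean N|).card : ℝ) /
    (Fintype.card (LemniscateTree N))

/-!
Deleting the vertex with the largest label maps `LT_{n+1}` bijectively onto the pairs `(T, v)`
with `T ∈ LT_n` and `v` a vertex of `T` with at most one child. Since `T` has `X(T) + 1` leaves
and `n - 1 - 2 X(T)` vertices with one child, the generating polynomial
`Q_n = ∑_T x ^ X(T)` satisfies `Q_{n+1} = (1 + (n - 1) x) Q_n + (x - 2 x²) Q_n'`.
The sign of the right-hand side alternates along the roots of `Q_n`, so by induction every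
`Q_n` has only simple negative roots `r_j`. Hence `Q_n(u) / Q_n(1) = ∏ (1 - p_j + p_j u)` with
`p_j = 1 / (1 - r_j)`, which is at most `exp (μ_n (u - 1))`, and the Chernoff bound gives
`P(|X_N - μ_N| > t) ≤ 2 exp (-t² / 4N)`. For `t = N^{α + 1/2}` this is `2 exp (-N^{2α} / 4)`,
which decays faster than any power of `N`.
-/

open Finset Polynomial Real

lemma StrictAnti.finCons {α : Type*} [Preorder α] {n : ℕ} {a : α} {f : Fin n → α}
    (hf : StrictAnti f) (ha : ∀ j, f j < a) : StrictAnti (Fin.cons a f : Fin (n + 1) → α) :=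
  (Fin.liftFun_cons (· > ·)).2 ⟨ha, hf⟩

lemma StrictAnti.finSnoc {α : Type*} [Preorder α] {n : ℕ} {a : α} {f : Fin n → α}
    (hf : StrictAnti f) (ha : ∀ j, a < f j) : StrictAnti (Fin.snoc f a : Fin (n + 1) → α) := by
  have := (Fin.strictMono_insertNth_iff (α := αᵒᵈ) (Fin.last n) (OrderDual.toDual a)
    (OrderDual.toDual ∘ f)).2 ⟨hf.dual_right, fun j _ => ha j, fun j h => absurd h (by simp)⟩
  rwa [Fin.insertNth_last'] at this

/-! ### Polynomials with simple negative roots -/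

lemma exists_isRoot_mem_Ioo {f : ℝ[X]} {a b : ℝ} (hab : a < b) (h : f.eval a * f.eval b < 0) :
    ∃ x ∈ Set.Ioo a b, f.IsRoot x := by
  rcases mul_neg_iff.mp h with ⟨ha, hb⟩ | ⟨ha, hb⟩
  · exact intermediate_value_Ioo' hab.le f.continuousOn (Set.mem_Ioo.2 ⟨hb, ha⟩)
  · exact intermediate_value_Ioo hab.le f.continuousOn (Set.mem_Ioo.2 ⟨ha, hb⟩)

lemma exists_isRoot_of_alternating {f : ℝ[X]} {m : ℕ} {s : Fin (m + 1) → ℝ} (hs : StrictAnti s)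
    (hsign : ∀ i : Fin (m + 1), 0 < (-1) ^ (i : ℕ) * f.eval (s i)) :
    ∃ x : Fin m → ℝ, StrictAnti x ∧ (∀ i, x i ∈ Set.Ioo (s i.succ) (s i.castSucc)) ∧
      ∀ i, f.IsRoot (x i) := by
  have hchange (i : Fin m) : f.eval (s i.succ) * f.eval (s i.castSucc) < 0 := by
    have h₁ := hsign i.succ
    have h₂ := hsign i.castSucc
    rw [Fin.val_succ, pow_succ] at h₁
    rw [Fin.val_castSucc] at h₂
    rcases neg_one_pow_eq_or ℝ (i : ℕ) with h | h <;> rw [h] at h₁ h₂ <;> nlinarith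
  choose x hx hroot using fun i =>
    exists_isRoot_mem_Ioo (hs (Fin.castSucc_lt_succ (i := i))) (hchange i)
  refine ⟨x, fun i j hij => ?_, hx, hroot⟩
  calc x j < s j.castSucc := (hx j).2
    _ ≤ s i.succ := hs.antitone (Fin.succ_le_castSucc_iff.2 hij)
    _ < x i := (hx i).1

def HasSimpleNegRoots (P : ℝ[X]) (k : ℕ) : Prop :=
  ∃ (c : ℝ) (r : Fin k → ℝ), 0 < c ∧ StrictAnti r ∧ (∀ j, r j < 0) ∧
    P = C c * ∏ j, (X - C (r j))

lemma natDegree_C_mul_prod_X_sub_C_le (c : ℝ) {k : ℕ} (r : Fin k → ℝ) :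
    (C c * ∏ j, (X - C (r j))).natDegree ≤ k :=
  (natDegree_C_mul_le _ _).trans
    (by rw [natDegree_finsetProd_X_sub_C_eq_card, card_univ, Fintype.card_fin])

lemma hasSimpleNegRoots_of_isRoot {R : ℝ[X]} {k : ℕ} {x : Fin k → ℝ} (hx : StrictAnti x)
    (hneg : ∀ j, x j < 0) (hroot : ∀ j, R.IsRoot (x j)) (hdeg : R.natDegree ≤ k)
    (h0 : 0 < R.eval 0) : HasSimpleNegRoots R k := by
  have hprod : 0 < ∏ j, -x j := prod_pos fun j _ => by linarith [hneg j]
  refine ⟨R.eval 0 / ∏ j, -x j, x, div_pos h0 hprod, hx, hneg, ?_⟩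
  -- both sides have degree at most `k` and agree at the `k + 1` points `0, x 0, …, x (k - 1)`
  refine eq_of_natDegree_lt_card_of_eval_eq _ _
    ((hx.finCons hneg).injective (f := (Fin.cons 0 x : Fin (k + 1) → ℝ))) ?_ ?_
  · refine Fin.cases ?_ fun j => ?_
    · simp [eval_prod, hprod.ne']
    · simp [(hroot j).eq_zero, eval_prod, prod_eq_zero (mem_univ j)]
  · simpa using ⟨hdeg, natDegree_C_mul_prod_X_sub_C_le _ _⟩

lemma neg_one_pow_mul_prod_erase_pos {k : ℕ} {r : Fin k → ℝ} (hr : StrictAnti r) (j : Fin k) :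
    0 < (-1) ^ (j : ℕ) * ∏ m ∈ univ.erase j, (r j - r m) := by
  have hsplit : univ.erase j = Iio j ∪ Ioi j := by ext m; simp [lt_or_lt_iff_ne, ne_comm]
  have hIio : ∏ m ∈ Iio j, (r j - r m) = (-1) ^ (j : ℕ) * ∏ m ∈ Iio j, (r m - r j) := by
    rw [← Fin.card_Iio j, ← prod_neg]; simp
  rw [hsplit, prod_union (disjoint_left.2 fun m h₁ h₂ => lt_asymm (mem_Iio.1 h₁) (mem_Ioi.1 h₂)),
    hIio, ← mul_assoc, ← mul_assoc, ← pow_add, Even.neg_one_pow ⟨_, rfl⟩, one_mul]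
  exact mul_pos (prod_pos fun m hm => sub_pos.2 (hr (mem_Iio.1 hm)))
    (prod_pos fun m hm => sub_pos.2 (hr (mem_Ioi.1 hm)))

lemma eval_derivative_C_mul_prod_X_sub_C {k : ℕ} (c : ℝ) (r : Fin k → ℝ) (j : Fin k) :
    (derivative (C c * ∏ m, (X - C (r m)))).eval (r j) =
      c * ∏ m ∈ univ.erase j, (r j - r m) := by
  rw [← mul_prod_erase univ _ (mem_univ j)]
  simp [eval_prod, derivative_mul]

noncomputable def lemniscateOp (b : ℝ) : ℝ[X] →ₗ[ℝ] ℝ[X] :=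
  LinearMap.mulLeft ℝ (1 + C b * X) + LinearMap.mulLeft ℝ (X - C 2 * X ^ 2) ∘ₗ derivative

lemma lemniscateOp_apply (b : ℝ) (P : ℝ[X]) :
    lemniscateOp b P = (1 + C b * X) * P + (X - C 2 * X ^ 2) * derivative P := rfl

lemma eval_lemniscateOp (b : ℝ) (P : ℝ[X]) (t : ℝ) :
    (lemniscateOp b P).eval t =
      (1 + b * t) * P.eval t + (t - 2 * t ^ 2) * (derivative P).eval t := by
  simp [lemniscateOp_apply]

lemma lemniscateOp_X_pow (b : ℝ) (m : ℕ) :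
    lemniscateOp b (X ^ m) = C ((m : ℝ) + 1) * X ^ m + C (b - 2 * m) * X ^ (m + 1) := by
  rcases m with _ | m
  · simp [lemniscateOp_apply]
  · simp [lemniscateOp_apply]
    ring

lemma coeff_lemniscateOp_succ (b : ℝ) (P : ℝ[X]) (m : ℕ) :
    (lemniscateOp b P).coeff (m + 1) = (m + 2) * P.coeff (m + 1) + (b - 2 * m) * P.coeff m := by
  have h : lemniscateOp b P =
      P + C b * (X * P) + X * derivative P - C 2 * (X ^ 2 * derivative P) := by
    rw [lemniscateOp_apply]; ring
  rw [h]
  rcases m with _ | m <;> simp [coeff_X_mul, coeff_derivative, coeff_X_pow_mul'] <;> ring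

lemma natDegree_lemniscateOp_le {P : ℝ[X]} {k : ℕ} (b : ℝ) (hP : P.natDegree ≤ k) :
    (lemniscateOp b P).natDegree ≤ k + 1 := by
  refine natDegree_le_iff_coeff_eq_zero.2 fun n hn => ?_
  obtain ⟨m, rfl⟩ := Nat.exists_eq_add_of_lt hn
  rw [show k + 1 + m + 1 = (k + 1 + m) + 1 by ring, coeff_lemniscateOp_succ,
    coeff_eq_zero_of_natDegree_lt (by omega), coeff_eq_zero_of_natDegree_lt (by omega)]
  ring

namespace HasSimpleNegRoots

variable {P : ℝ[X]} {k : ℕ}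

lemma natDegree_eq (hP : HasSimpleNegRoots P k) : P.natDegree = k := by
  obtain ⟨c, r, hc, -, -, rfl⟩ := hP
  rw [natDegree_C_mul hc.ne', natDegree_finsetProd_X_sub_C_eq_card, card_univ, Fintype.card_fin]

lemma leadingCoeff_pos (hP : HasSimpleNegRoots P k) : 0 < P.leadingCoeff := by
  obtain ⟨c, r, hc, -, -, rfl⟩ := hP
  rwa [leadingCoeff_mul, leadingCoeff_C,
    (monic_prod_of_monic _ _ fun j _ => monic_X_sub_C (r j)).leadingCoeff, mul_one]

lemma eval_pos (hP : HasSimpleNegRoots P k) {u : ℝ} (hu : 0 ≤ u) : 0 < P.eval u := by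
  obtain ⟨c, r, hc, -, hneg, rfl⟩ := hP
  simpa [eval_prod] using mul_pos hc (prod_pos fun j _ => by linarith [hneg j])

lemma coeff_lemniscateOp (hP : HasSimpleNegRoots P k) (b : ℝ) :
    (lemniscateOp b P).coeff (k + 1) = (b - 2 * k) * P.leadingCoeff := by
  rw [coeff_lemniscateOp_succ, coeff_eq_zero_of_natDegree_lt (by rw [hP.natDegree_eq]; omega),
    leadingCoeff, hP.natDegree_eq]
  ring

/-- `s` is `0` followed by the roots of `P`. -/
lemma exists_alternating_lemniscateOp (hP : HasSimpleNegRoots P k) (b : ℝ) :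
    ∃ s : Fin (k + 1) → ℝ, StrictAnti s ∧ s 0 = 0 ∧
      ∀ i : Fin (k + 1), 0 < (-1) ^ (i : ℕ) * (lemniscateOp b P).eval (s i) := by
  have h0 := hP.eval_pos le_rfl
  obtain ⟨c, r, hc, hr, hneg, rfl⟩ := hP
  refine ⟨Fin.cons 0 r, hr.finCons hneg, rfl, Fin.cases ?_ fun j => ?_⟩
  · simpa [eval_lemniscateOp] using h0
  -- at a root `r j` of `P` only the derivative term survives
  have hroot : (C c * ∏ m, (X - C (r m))).eval (r j) = 0 := by
    simp [eval_prod, prod_eq_zero (mem_univ j)]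
  have hsign := neg_one_pow_mul_prod_erase_pos hr j
  have hfactor : r j - 2 * r j ^ 2 < 0 := by nlinarith [hneg j]
  simp only [Fin.cons_succ, Fin.val_succ, eval_lemniscateOp, hroot,
    eval_derivative_C_mul_prod_X_sub_C, pow_succ]
  nlinarith [mul_pos (mul_pos hc hsign) (neg_pos.2 hfactor)]

lemma lemniscateOp_of_eq (hP : HasSimpleNegRoots P k) {b : ℝ} (hb : b = 2 * k) :
    HasSimpleNegRoots (lemniscateOp b P) k := by
  obtain ⟨s, hs, hs0, hsign⟩ := hP.exists_alternating_lemniscateOp b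
  obtain ⟨x, hx, hxs, hroot⟩ := exists_isRoot_of_alternating hs hsign
  have hdeg : (lemniscateOp b P).natDegree ≤ k := by
    refine natDegree_le_iff_coeff_eq_zero.2 fun n hn => ?_
    rcases (Nat.succ_le_of_lt hn).eq_or_lt with rfl | hn
    · rw [hP.coeff_lemniscateOp, hb, sub_self, zero_mul]
    · exact coeff_eq_zero_of_natDegree_lt
        ((natDegree_lemniscateOp_le b hP.natDegree_eq.le).trans_lt hn)
  refine hasSimpleNegRoots_of_isRoot hx (fun j => ?_) hroot hdeg (by simpa [hs0] using hsign 0)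
  exact (hxs j).2.trans_le (hs0 ▸ hs.antitone (Fin.zero_le _))

lemma lemniscateOp_of_lt (hP : HasSimpleNegRoots P k) {b : ℝ} (hb : 2 * k < b) :
    HasSimpleNegRoots (lemniscateOp b P) (k + 1) := by
  set R := lemniscateOp b P
  obtain ⟨s, hs, hs0, hsign⟩ := hP.exists_alternating_lemniscateOp b
  obtain ⟨x, hx, hxs, hroot⟩ := exists_isRoot_of_alternating hs hsign
  have hcoeff : 0 < R.coeff (k + 1) := by
    rw [hP.coeff_lemniscateOp]; exact mul_pos (by linarith) hP.leadingCoeff_pos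
  have hdeg : R.natDegree = k + 1 :=
    (natDegree_lemniscateOp_le b hP.natDegree_eq.le).antisymm
      (le_natDegree_of_ne_zero hcoeff.ne')
  -- `R` has degree `k + 1` but sign `(-1) ^ k` at `s (last k)`, so it has a root further left
  obtain ⟨u, hu, hroot_u⟩ : ∃ u < s (Fin.last k), R.IsRoot u := by
    by_contra! h
    have hlast := hsign (Fin.last k)
    have hlt : ∀ y, R.IsRoot y → s (Fin.last k) < y := fun y hy =>
      lt_of_le_of_ne (not_lt.1 fun h' => h y h' hy) fun he => by
        rw [he, hy.eq_zero, mul_zero] at hlast; exact hlast.false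
    have hinf := zero_lt_negOnePow_mul_eval_of_lt_roots_of_leadingCoeff_nonneg hlt
      (by rw [leadingCoeff, hdeg]; exact hcoeff.le)
    rw [Int.cast_negOnePow_natCast, hdeg, pow_succ] at hinf
    simp only [Fin.val_last] at hlast
    nlinarith
  have hxu : ∀ j, u < x j := fun j =>
    hu.trans ((hs.antitone (Fin.le_last _)).trans_lt (hxs j).1)
  refine hasSimpleNegRoots_of_isRoot (hx.finSnoc hxu) (fun j => ?_) (fun j => ?_)
    hdeg.le (by simpa [hs0] using hsign 0)
  · refine Fin.lastCases ?_ (fun j => ?_) j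
    · simpa using hu.trans_le (hs0 ▸ hs.antitone (Fin.zero_le _))
    · simpa using (hxs j).2.trans_le (hs0 ▸ hs.antitone (Fin.zero_le _))
  · refine Fin.lastCases ?_ (fun j => ?_) j
    · simpa using hroot_u
    · simpa using hroot j

end HasSimpleNegRoots

/-! ### Poisson domination and the Chernoff bound -/

lemma sub_le_mul_exp {r u : ℝ} (hr : r < 1) :
    u - r ≤ (1 - r) * exp ((1 - r)⁻¹ * (u - 1)) := by
  have h1r : 0 < 1 - r := by linarith
  calc u - r = (1 - r) * ((1 - r)⁻¹ * (u - 1) + 1) := by field_simp; ring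
    _ ≤ (1 - r) * exp ((1 - r)⁻¹ * (u - 1)) :=
      mul_le_mul_of_nonneg_left (add_one_le_exp _) h1r.le

lemma eval_derivative_div_eval_C_mul_prod {ι : Type*} [Fintype ι] [DecidableEq ι] {c : ℝ}
    (hc : c ≠ 0) {r : ι → ℝ} {u : ℝ} (hr : ∀ j, r j ≠ u) :
    (derivative (C c * ∏ j, (X - C (r j)))).eval u / (C c * ∏ j, (X - C (r j))).eval u =
      ∑ j, (u - r j)⁻¹ := by
  have hne (j : ι) : u - r j ≠ 0 := sub_ne_zero.2 (hr j).symm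
  have herase (j : ι) :
      ∏ m ∈ univ.erase j, (u - r m) = (∏ m, (u - r m)) * (u - r j)⁻¹ := by
    rw [← mul_prod_erase univ _ (mem_univ j), mul_comm (u - r j), mul_assoc,
      mul_inv_cancel₀ (hne j), mul_one]
  simp only [derivative_mul, derivative_C, zero_mul, zero_add, derivative_prod_finset,
    derivative_sub, derivative_X, sub_zero, mul_one, eval_mul, eval_C, eval_finsetSum, eval_prod,
    eval_sub, eval_X, herase, ← mul_sum]
  field_simp [prod_ne_zero_iff.2 fun j _ => hne j]

namespace HasSimpleNegRoots

variable {P : ℝ[X]} {k : ℕ}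

lemma eval_le_eval_one_mul_exp (hP : HasSimpleNegRoots P k) {u : ℝ} (hu : 0 ≤ u) :
    P.eval u ≤ P.eval 1 * exp ((derivative P).eval 1 / P.eval 1 * (u - 1)) := by
  classical
  obtain ⟨c, r, hc, -, hneg, rfl⟩ := hP
  rw [eval_derivative_div_eval_C_mul_prod hc.ne' fun j => by linarith [hneg j]]
  simp only [eval_mul, eval_C, eval_prod, eval_sub, eval_X, mul_assoc]
  refine mul_le_mul_of_nonneg_left ?_ hc.le
  rw [sum_mul, exp_sum, ← prod_mul_distrib]
  exact prod_le_prod (fun j _ => by linarith [hneg j])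
    fun j _ => sub_le_mul_exp (by linarith [hneg j])

lemma derivative_eval_one_div_mem_Icc (hP : HasSimpleNegRoots P k) :
    (derivative P).eval 1 / P.eval 1 ∈ Set.Icc 0 (k : ℝ) := by
  classical
  obtain ⟨c, r, hc, -, hneg, rfl⟩ := hP
  rw [eval_derivative_div_eval_C_mul_prod hc.ne' fun j => by linarith [hneg j]]
  have h (j : Fin k) : (1 - r j)⁻¹ ∈ Set.Icc (0 : ℝ) 1 :=
    ⟨inv_nonneg.2 (by linarith [hneg j]), inv_le_one_of_one_le₀ (by linarith [hneg j])⟩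
  exact ⟨sum_nonneg fun j _ => (h j).1,
    by simpa using sum_le_sum fun j (_ : j ∈ univ) => (h j).2⟩

end HasSimpleNegRoots

/-- The hypothesis `hmgf` says that the generating function of `f` is dominated by that of a
Poisson variable of mean `μ`. -/
lemma card_lt_mul_sub_le {α : Type*} [Fintype α] (f : α → ℕ) {μ l s : ℝ} (hμ : 0 ≤ μ)
    (hl : |l| ≤ 1)
    (hmgf : ∀ u, 0 < u → ∑ a, u ^ f a ≤ Fintype.card α * exp (μ * (u - 1))) :
    (#{a | s < l * (f a - μ)} : ℝ) ≤ Fintype.card α * exp (μ * l ^ 2 - s) := by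
  have hmarkov : (#{a | s < l * (f a - μ)} : ℝ) * exp s ≤ ∑ a, exp (l * (f a - μ)) := by
    rw [← nsmul_eq_mul]
    refine (card_nsmul_le_sum _ _ _ fun a ha => (exp_lt_exp.2 (mem_filter.1 ha).2).le).trans ?_
    exact sum_le_sum_of_subset_of_nonneg (filter_subset _ _) fun _ _ _ => (exp_pos _).le
  have hsum : ∑ a, exp (l * (f a - μ)) = exp (-(l * μ)) * ∑ a, exp l ^ f a := by
    rw [mul_sum]
    refine sum_congr rfl fun a _ => ?_
    rw [← exp_nat_mul, ← exp_add]
    ring_nf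
  have hquad : μ * (exp l - 1 - l) ≤ μ * l ^ 2 :=
    mul_le_mul_of_nonneg_left (le_of_abs_le (abs_exp_sub_one_sub_id_le hl)) hμ
  rw [exp_sub, ← mul_div_assoc, le_div_iff₀ (exp_pos s)]
  refine hmarkov.trans ?_
  rw [hsum]
  calc exp (-(l * μ)) * ∑ a, exp l ^ f a
      ≤ exp (-(l * μ)) * (Fintype.card α * exp (μ * (exp l - 1))) :=
        mul_le_mul_of_nonneg_left (hmgf _ (exp_pos l)) (exp_pos _).le
    _ = Fintype.card α * exp (μ * (exp l - 1 - l)) := by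
        rw [mul_left_comm, ← exp_add]; ring_nf
    _ ≤ Fintype.card α * exp (μ * l ^ 2) := by gcongr

lemma card_lt_abs_sub_le {α : Type*} [Fintype α] (f : α → ℕ) {μ n t : ℝ} (hμ : 0 ≤ μ)
    (hμn : μ ≤ n) (ht : 0 < t) (htn : t ≤ 2 * n)
    (hmgf : ∀ u, 0 < u → ∑ a, u ^ f a ≤ Fintype.card α * exp (μ * (u - 1))) :
    (#{a | t < |f a - μ|} : ℝ) ≤ 2 * Fintype.card α * exp (-(t ^ 2 / (4 * n))) := by
  classical
  have hn : 0 < n := by linarith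
  set l := t / (2 * n)
  set s := t ^ 2 / (2 * n)
  have hl : |l| ≤ 1 := by rw [abs_of_pos (by positivity), div_le_one (by positivity)]; exact htn
  have hexp : μ * l ^ 2 - s ≤ -(t ^ 2 / (4 * n)) := by
    have : μ * l ^ 2 ≤ n * l ^ 2 := by gcongr
    have : n * l ^ 2 = t ^ 2 / (4 * n) := by simp only [l]; field_simp; ring
    have : s = 2 * (t ^ 2 / (4 * n)) := by simp only [s]; field_simp; ring
    linarith
  have hsub : ({a | t < |f a - μ|} : Finset α) ⊆
      ({a | s < l * (f a - μ)} : Finset α) ∪ ({a | s < -l * (f a - μ)} : Finset α) := by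
    intro a ha
    have hs : s = l * t := by simp only [s, l]; field_simp
    simp only [mem_filter, mem_univ, true_and, mem_union, hs] at ha ⊢
    rcases lt_abs.1 ha with h | h
    · left; exact mul_lt_mul_of_pos_left h (by positivity)
    · right; linarith [mul_lt_mul_of_pos_left h (show 0 < l by positivity)]
  calc (#{a | t < |f a - μ|} : ℝ)
      ≤ #{a | s < l * (f a - μ)} + #{a | s < -l * (f a - μ)} := by
        exact_mod_cast (card_le_card hsub).trans (card_union_le _ _)
    _ ≤ Fintype.card α * exp (μ * l ^ 2 - s) + Fintype.card α * exp (μ * (-l) ^ 2 - s) :=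
        add_le_add (card_lt_mul_sub_le f hμ hl hmgf)
          (card_lt_mul_sub_le f hμ (by rwa [abs_neg]) hmgf)
    _ ≤ 2 * Fintype.card α * exp (-(t ^ 2 / (4 * n))) := by
        rw [neg_sq, ← two_mul, mul_assoc]; gcongr

lemma exists_exp_neg_rpow_div_le {a c : ℝ} (ha : 0 < a) (hc : 0 < c) (s : ℝ) :
    ∃ C > 0, ∀ x : ℝ, 1 ≤ x → exp (-(x ^ a / c)) ≤ C * x ^ (-s) := by
  obtain ⟨m, hm⟩ : ∃ m : ℕ, s ≤ a * m :=
    ⟨⌈s / a⌉₊, by rw [← div_le_iff₀' ha]; exact Nat.le_ceil _⟩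
  refine ⟨m.factorial * c ^ m, by positivity, fun x hx => ?_⟩
  have hx0 : 0 < x := by linarith
  have hy : 0 < x ^ a / c := by positivity
  have hym : (x ^ a / c) ^ m = x ^ (a * m) / c ^ m := by
    rw [div_pow, ← rpow_natCast, ← rpow_mul hx0.le]
  calc exp (-(x ^ a / c)) = (exp (x ^ a / c))⁻¹ := exp_neg _
    _ ≤ ((x ^ a / c) ^ m / m.factorial)⁻¹ :=
        inv_anti₀ (by positivity) (pow_div_factorial_le_exp _ hy.le m)
    _ = m.factorial * c ^ m * (x ^ (a * m))⁻¹ := by rw [hym]; field_simp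
    _ ≤ m.factorial * c ^ m * x ^ (-s) := by
        rw [rpow_neg hx0.le]
        gcongr

/-! ### Lemniscate trees -/

namespace LemniscateTree

variable {n N : ℕ}

def childCount (f : Fin N → Option (Fin N)) (j : Fin N) : ℕ := #{i | f i = some j}

def IsLemniscate (f : Fin N → Option (Fin N)) : Prop :=
  (∀ i : Fin N, f i = none ↔ (i : ℕ) = 0) ∧ (∀ i j : Fin N, f i = some j → (j : ℕ) < (i : ℕ)) ∧
    ∀ j : Fin N, childCount f j ≤ 2

lemma childCount_le_two (T : LemniscateTree N) (j : Fin N) : childCount T.1 j ≤ 2 := T.2.2.2 j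

lemma outdegTwoCount_eq (T : LemniscateTree N) :
    outdegTwoCount T = #{j | childCount T.1 j = 2} := rfl

lemma card_parent_eq_none (T : LemniscateTree N) (hN : 0 < N) : #{i | T.1 i = none} = 1 := by
  rw [card_eq_one]
  exact ⟨⟨0, hN⟩, by ext i; simp [T.2.1 i, Fin.ext_iff]⟩

lemma sum_childCount_add_one (T : LemniscateTree N) (hN : 0 < N) :
    ∑ j, childCount T.1 j + 1 = N := by
  have h := card_eq_sum_card_fiberwise (f := T.1) (s := univ) (t := univ) fun _ _ => mem_univ _
  rw [card_univ, Fintype.card_fin, Fintype.sum_option, card_parent_eq_none T hN, add_comm] at h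
  exact h.symm

lemma card_childCount_eq (T : LemniscateTree N) (hN : 0 < N) :
    #{j | childCount T.1 j = 0} = outdegTwoCount T + 1 ∧
      #{j | childCount T.1 j = 1} + 2 * outdegTwoCount T + 1 = N := by
  have hpart (j : Fin N) : (if childCount T.1 j = 0 then 1 else 0) +
      (if childCount T.1 j = 1 then 1 else 0) + (if childCount T.1 j = 2 then 1 else 0) = 1 ∧
      (if childCount T.1 j = 1 then 1 else 0) + 2 * (if childCount T.1 j = 2 then 1 else 0) =
        childCount T.1 j := by
    have := childCount_le_two T j
    interval_cases childCount T.1 j <;> simp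
  have hcard : #{j | childCount T.1 j = 0} + #{j | childCount T.1 j = 1} +
      #{j | childCount T.1 j = 2} = N := by
    simp only [card_filter, ← sum_add_distrib, fun j => (hpart j).1, sum_const, card_univ,
      Fintype.card_fin, smul_eq_mul, mul_one]
  have hsum : #{j | childCount T.1 j = 1} + 2 * #{j | childCount T.1 j = 2} + 1 = N := by
    simp only [card_filter, mul_sum, ← sum_add_distrib, fun j => (hpart j).2]
    exact sum_childCount_add_one T hN
  rw [outdegTwoCount_eq]
  omega

def addLeaf (f : Fin n → Option (Fin n)) (p : Fin n) : Fin (n + 1) → Option (Fin (n + 1)) :=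
  Fin.lastCases (some p.castSucc) fun i => (f i).map Fin.castSucc

def removeLast (f : Fin (n + 1) → Option (Fin (n + 1))) (i : Fin n) : Option (Fin n) :=
  (f i.castSucc).bind (Fin.lastCases none some)

@[simp] lemma addLeaf_last (f : Fin n → Option (Fin n)) (p : Fin n) :
    addLeaf f p (Fin.last n) = some p.castSucc := Fin.lastCases_last

@[simp] lemma addLeaf_castSucc (f : Fin n → Option (Fin n)) (p : Fin n) (i : Fin n) :
    addLeaf f p i.castSucc = (f i).map Fin.castSucc := Fin.lastCases_castSucc i

@[simp] lemma removeLast_addLeaf (f : Fin n → Option (Fin n)) (p : Fin n) :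
    removeLast (addLeaf f p) = f := by
  funext i
  cases h : f i <;> simp [removeLast, h]

lemma childCount_addLeaf_castSucc (f : Fin n → Option (Fin n)) (p j : Fin n) :
    childCount (addLeaf f p) j.castSucc = childCount f j + if j = p then 1 else 0 := by
  simp only [childCount, card_filter, Fin.sum_univ_castSucc, addLeaf_castSucc, addLeaf_last,
    Option.some_inj, Fin.castSucc_inj, eq_comm (a := p)]
  congr 1
  refine sum_congr rfl fun i _ => ?_
  cases f i <;> simp

lemma childCount_addLeaf_last (f : Fin n → Option (Fin n)) (p : Fin n) :
    childCount (addLeaf f p) (Fin.last n) = 0 := by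
  simp only [childCount, card_eq_zero, filter_eq_empty_iff, mem_univ, true_implies]
  refine Fin.lastCases ?_ fun i => ?_
  · simp [Fin.castSucc_ne_last]
  · cases f i <;> simp [Fin.castSucc_ne_last]

lemma isLemniscate_addLeaf_iff {f : Fin n → Option (Fin n)} {p : Fin n} :
    IsLemniscate (addLeaf f p) ↔ IsLemniscate f ∧ childCount f p ≤ 1 := by
  have hn : n ≠ 0 := p.pos.ne'
  have hcc : (∀ j, childCount f j + (if j = p then 1 else 0) ≤ 2) ↔
      (∀ j, childCount f j ≤ 2) ∧ childCount f p ≤ 1 := by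
    refine ⟨fun h => ⟨fun j => (Nat.le_add_right _ _).trans (h j), ?_⟩, fun h j => ?_⟩
    · simpa using h p
    · split_ifs with hj
      · subst hj; omega
      · exact h.1 j
  simp only [IsLemniscate, Fin.forall_fin_succ', Fin.val_castSucc, Fin.val_last]
  simp [childCount_addLeaf_castSucc, childCount_addLeaf_last, Option.map_eq_some_iff,
    Fin.castSucc_ne_last, hn, hcc, and_assoc]

lemma exists_eq_addLeaf_removeLast {f : Fin (n + 1) → Option (Fin (n + 1))}
    (hf : IsLemniscate f) (hn : 0 < n) : ∃ p, f = addLeaf (removeLast f) p := by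
  have hlt (i : Fin (n + 1)) {q : Fin (n + 1)} (h : f i = some q) : q ≠ Fin.last n :=
    Fin.ne_of_lt (Fin.lt_def.2 ((hf.2.1 i q h).trans_le (Nat.lt_succ_iff.1 i.is_lt)))
  obtain ⟨q, hq⟩ := Option.ne_none_iff_exists'.1 fun h => by
    simpa [hn.ne'] using (hf.1 (Fin.last n)).1 h
  obtain ⟨p, rfl⟩ := Fin.exists_castSucc_eq.2 (hlt _ hq)
  refine ⟨p, funext (Fin.lastCases (by simpa using hq) fun i => ?_)⟩
  rcases h : f i.castSucc with _ | q
  · simp [removeLast, h]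
  · obtain ⟨q, rfl⟩ := Fin.exists_castSucc_eq.2 (hlt _ h)
    simp [removeLast, h]

lemma card_childCount_addLeaf_eq_two (f : Fin n → Option (Fin n)) {p : Fin n}
    (hp : childCount f p ≤ 1) :
    #{j | childCount (addLeaf f p) j = 2} =
      #{j | childCount f j = 2} + if childCount f p = 1 then 1 else 0 := by
  have key (j : Fin n) : (if childCount f j + (if j = p then 1 else 0) = 2 then 1 else 0) =
      (if childCount f j = 2 then 1 else 0) +
        if j = p then (if childCount f p = 1 then 1 else 0) else 0 := by
    split_ifs <;> simp_all
  simp only [card_filter, Fin.sum_univ_castSucc, childCount_addLeaf_castSucc,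
    childCount_addLeaf_last, key, sum_add_distrib, sum_ite_eq', mem_univ, if_true]
  simp

def addLeafTree (x : Σ T : LemniscateTree n, {p // childCount T.1 p ≤ 1}) :
    LemniscateTree (n + 1) :=
  ⟨addLeaf x.1.1 x.2.1, isLemniscate_addLeaf_iff.2 ⟨x.1.2, x.2.2⟩⟩

lemma addLeafTree_bijective (hn : 0 < n) : Function.Bijective (addLeafTree (n := n)) := by
  refine ⟨fun ⟨T, p, hp⟩ ⟨T', p', hp'⟩ h => ?_, fun T' => ?_⟩
  · have h : addLeaf T.1 p = addLeaf T'.1 p' := congrArg Subtype.val h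
    have hT : T = T' := Subtype.ext (by simpa using congrArg removeLast h)
    have hp : p = p' := by simpa using congrFun h (Fin.last n)
    subst hT hp
    rfl
  · obtain ⟨p, hp⟩ := exists_eq_addLeaf_removeLast T'.2 hn
    have h := isLemniscate_addLeaf_iff.1 (hp ▸ T'.2)
    exact ⟨⟨⟨removeLast T'.1, h.1⟩, p, h.2⟩, Subtype.ext hp.symm⟩

lemma outdegTwoCount_addLeafTree (T : LemniscateTree n) (p : {p // childCount T.1 p ≤ 1}) :
    outdegTwoCount (addLeafTree ⟨T, p⟩) =
      outdegTwoCount T + if childCount T.1 p = 1 then 1 else 0 :=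
  card_childCount_addLeaf_eq_two T.1 p.2

noncomputable def genPoly (N : ℕ) : ℝ[X] := ∑ T : LemniscateTree N, X ^ outdegTwoCount T

lemma eval_genPoly (N : ℕ) (u : ℝ) :
    (genPoly N).eval u = ∑ T : LemniscateTree N, u ^ outdegTwoCount T := by
  simp [genPoly, eval_finsetSum]

lemma lemMean_eq (N : ℕ) :
    lemMean N = (derivative (genPoly N)).eval 1 / (genPoly N).eval 1 := by
  simp [lemMean, genPoly, eval_finsetSum, derivative_X_pow]

lemma genPoly_one : genPoly 1 = 1 := by
  have hroot (T : LemniscateTree 1) : T.1 = fun _ => none :=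
    funext fun i => (T.2.1 i).2 i.val_eq_zero
  let T₀ : LemniscateTree 1 := ⟨fun _ => none, by simp [Fin.val_eq_zero], by simp, by simp⟩
  have hcard : Fintype.card (LemniscateTree 1) = 1 :=
    Fintype.card_eq_one_iff.2 ⟨T₀, fun T => Subtype.ext (hroot T)⟩
  have hdeg (T : LemniscateTree 1) : outdegTwoCount T = 0 := by
    simp [outdegTwoCount_eq, childCount, hroot T]
  simp [genPoly, hdeg, hcard]

lemma sum_X_pow_outdegTwoCount_addLeafTree (T : LemniscateTree n) (hn : 0 < n) :
    ∑ p : {p // childCount T.1 p ≤ 1}, (X : ℝ[X]) ^ outdegTwoCount (addLeafTree ⟨T, p⟩) =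
      lemniscateOp ((n : ℝ) - 1) (X ^ outdegTwoCount T) := by
  set x := outdegTwoCount T
  have hslot (p : Fin n) : (if childCount T.1 p ≤ 1 then
      (X : ℝ[X]) ^ (x + if childCount T.1 p = 1 then 1 else 0) else 0) =
      (if childCount T.1 p = 0 then X ^ x else 0) +
        if childCount T.1 p = 1 then X ^ (x + 1) else 0 := by
    have := childCount_le_two T p
    interval_cases childCount T.1 p <;> simp
  obtain ⟨h0, h1⟩ := card_childCount_eq T hn
  have h1' : (#{j | childCount T.1 j = 1} : ℝ) = n - 1 - 2 * x := by
    have : (#{j | childCount T.1 j = 1} : ℝ) + 2 * x + 1 = n := by exact_mod_cast h1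
    linarith
  simp only [outdegTwoCount_addLeafTree]
  rw [← sum_subtype (univ.filter fun p => childCount T.1 p ≤ 1) (by simp)
    (fun p => (X : ℝ[X]) ^ (x + if childCount T.1 p = 1 then 1 else 0)), sum_filter]
  simp only [hslot, sum_add_distrib, ← sum_filter, sum_const, nsmul_eq_mul, lemniscateOp_X_pow,
    h0, ← h1']
  simp [x]

lemma genPoly_succ (hn : 0 < n) :
    genPoly (n + 1) = lemniscateOp ((n : ℝ) - 1) (genPoly n) := by
  rw [genPoly, ← (addLeafTree_bijective hn).sum_comp, Fintype.sum_sigma, genPoly, map_sum]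
  exact sum_congr rfl fun T _ => sum_X_pow_outdegTwoCount_addLeafTree T hn

lemma hasSimpleNegRoots_genPoly (hn : 0 < n) :
    ∃ k, 2 * k < n ∧ HasSimpleNegRoots (genPoly n) k := by
  induction n, hn using Nat.le_induction with
  | base =>
    exact ⟨0, by norm_num, 1, Fin.elim0, one_pos, fun a => a.elim0, fun a => a.elim0,
      by simp [genPoly_one]⟩
  | succ n hn ih =>
    obtain ⟨k, hk, hP⟩ := ih
    rw [genPoly_succ hn]
    rcases (Nat.lt_iff_add_one_le.1 hk).eq_or_lt with h | h
    · exact ⟨k, by omega, hP.lemniscateOp_of_eq (by rw [← h]; push_cast; ring)⟩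
    · refine ⟨k + 1, by omega, hP.lemniscateOp_of_lt ?_⟩
      have : ((2 * k + 1 + 1 : ℕ) : ℝ) ≤ n := by exact_mod_cast h
      push_cast at this
      linarith

lemma devProb_le (hN : 0 < N) {α : ℝ} (hα : α ≤ 1 / 2) :
    devProb N α ≤ 2 * exp (-((N : ℝ) ^ (2 * α) / 4)) := by
  obtain ⟨k, hk, hP⟩ := hasSimpleNegRoots_genPoly hN
  have hN' : (0 : ℝ) < N := by exact_mod_cast hN
  have hcard : (genPoly N).eval 1 = Fintype.card (LemniscateTree N) := by simp [eval_genPoly]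
  have hcard0 : (0 : ℝ) < Fintype.card (LemniscateTree N) := hcard ▸ hP.eval_pos zero_le_one
  obtain ⟨hμ0, hμk⟩ := hP.derivative_eval_one_div_mem_Icc
  rw [← lemMean_eq] at hμ0 hμk
  have hμN : lemMean N ≤ N := hμk.trans (by exact_mod_cast (by omega : k ≤ N))
  have hmgf (u : ℝ) (hu : 0 < u) : ∑ T : LemniscateTree N, u ^ outdegTwoCount T ≤
      Fintype.card (LemniscateTree N) * exp (lemMean N * (u - 1)) := by
    rw [← eval_genPoly, ← hcard, lemMean_eq]
    exact hP.eval_le_eval_one_mul_exp hu.le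
  have ht : (N : ℝ) ^ (α + 1 / 2) ≤ 2 * N :=
    calc (N : ℝ) ^ (α + 1 / 2) ≤ (N : ℝ) ^ (1 : ℝ) :=
          rpow_le_rpow_of_exponent_le (by exact_mod_cast hN) (by linarith)
      _ ≤ 2 * N := by rw [rpow_one]; linarith
  have hsq : ((N : ℝ) ^ (α + 1 / 2)) ^ 2 / (4 * N) = (N : ℝ) ^ (2 * α) / 4 := by
    rw [← rpow_natCast, ← rpow_mul hN'.le, show (α + 1 / 2) * ((2 : ℕ) : ℝ) = 2 * α + 1 by
      push_cast; ring, rpow_add hN', rpow_one]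
    field_simp
  have h := card_lt_abs_sub_le (outdegTwoCount (N := N)) hμ0 hμN (by positivity) ht hmgf
  rw [hsq] at h
  rw [devProb, div_le_iff₀ hcard0]
  linarith

end LemniscateTree

/-- for `0 < α < 1/2`,
`P(|X_N − μ_N| > N^{α+1/2}) = O(N^{α−1/2})`; in particular it tends to `0`. -/
theorem outdegTwo_concentration (α : ℝ) (hα0 : 0 < α) (hα : α < 1 / 2) :
    (∃ C : ℝ, 0 < C ∧ ∀ N : ℕ, 1 ≤ N →
        devProb N α ≤ C * (N : ℝ) ^ (α - 1 / 2)) ∧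
    Filter.Tendsto (fun N : ℕ => devProb N α) Filter.atTop (nhds 0) := by
  obtain ⟨C, hC, hexp⟩ :=
    exists_exp_neg_rpow_div_le (by linarith : 0 < 2 * α) four_pos (1 / 2 - α)
  have hbound (N : ℕ) (hN : 1 ≤ N) : devProb N α ≤ 2 * C * (N : ℝ) ^ (α - 1 / 2) :=
    calc devProb N α ≤ 2 * exp (-((N : ℝ) ^ (2 * α) / 4)) := LemniscateTree.devProb_le hN hα.le
      _ ≤ 2 * (C * (N : ℝ) ^ (-(1 / 2 - α))) := by gcongr; exact hexp N (by exact_mod_cast hN)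
      _ = 2 * C * (N : ℝ) ^ (α - 1 / 2) := by rw [neg_sub, mul_assoc]
  have hlim : Filter.Tendsto (fun N : ℕ => 2 * C * (N : ℝ) ^ (α - 1 / 2)) Filter.atTop
      (nhds 0) := by
    simpa using ((tendsto_rpow_neg_atTop (by linarith : 0 < 1 / 2 - α)).comp
      tendsto_natCast_atTop_atTop).const_mul (2 * C)
  refine ⟨⟨2 * C, by positivity, hbound⟩, ?_⟩
  exact tendsto_of_tendsto_of_tendsto_of_le_of_le' tendsto_const_nhds hlim
    (Filter.Eventually.of_forall fun N => by unfold devProb; positivity)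
    (Filter.eventually_atTop.2 ⟨1, hbound⟩)
end

section
/- Let p be a nonconstant complex polynomial, let t > 0, and let γ be a connected component of the level set {z ∈ ℂ : |p(z)| = t} which is a Jordan curve; let U be the bounded complementary component (the interior) of γ. If p has exactly one zero in U counted with multiplicity, then p maps U bijectively (univalently) onto the open disk {ζ ∈ ℂ : |ζ| < t}; in particular, the derivative p' has no zeros in U. -/
/-!
The frontier of a component of `γᶜ` lies in `γ`, so `‖p‖ = t` on `∂U`. By the maximum principle
`p` maps `U` into the disk `B = ball 0 t`, and onto it: `p '' U ∩ B` is open by the open mapping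
theorem and closed in `B`, being equal to `p '' closure U ∩ B`, a compact image.

Call `w ∈ B` a simple value if it has exactly one preimage in `U`, at which `p'` does not vanish.
This is an open condition: near a regular point `p` is injective, and compactness of `closure U`
keeps all other preimages of nearby values close to it. Its failure is open too: two distinct
preimages persist by the open mapping theorem, and near a critical point `z` we can write
`p - p z = F ^ m` with `m ≥ 2` and `F` a local coordinate, so every nearby value has two
preimages near `z`. As `B` is connected and `0` is a simple value, every `w ∈ B` is one.
-/

open Polynomial Metric Set Filter Topology Bornology

theorem IsClosed.connectedComponentIn {X : Type*} [TopologicalSpace X] {F : Set X}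
    (hF : IsClosed F) (x : X) : IsClosed (connectedComponentIn F x) := by
  by_cases hx : x ∈ F
  · exact isClosed_of_closure_subset <|
      isPreconnected_connectedComponentIn.closure.subset_connectedComponentIn
        (subset_closure (mem_connectedComponentIn hx))
        (closure_minimal (connectedComponentIn_subset F x) hF)
  · simp [connectedComponentIn_eq_empty hx]

theorem IsOpen.frontier_connectedComponentIn_subset {X : Type*} [TopologicalSpace X]
    [LocallyConnectedSpace X] {F : Set X} (hF : IsOpen F) (x : X) :
    frontier (connectedComponentIn F x) ⊆ Fᶜ := by
  intro y hy hyF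
  rw [hF.connectedComponentIn.frontier_eq] at hy
  obtain ⟨z, hzy, hzx⟩ :=
    mem_closure_iff_nhds.mp hy.1 _ (connectedComponentIn_mem_nhds (hF.mem_nhds hyF))
  rw [connectedComponentIn_eq hzx, ← connectedComponentIn_eq hzy] at hy
  exact hy.2 (mem_connectedComponentIn hyF)

theorem IsPreconnected.subset_image_of_frontier {X Y : Type*} [TopologicalSpace X]
    [TopologicalSpace Y] [T2Space Y] {f : X → Y} {U : Set X} {V : Set Y}
    (hV : IsPreconnected V) (hf : ContinuousOn f (closure U)) (hU : IsCompact (closure U))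
    (hopen : IsOpen (f '' U)) (hfr : ∀ x ∈ frontier U, f x ∉ V)
    (hne : (V ∩ f '' U).Nonempty) : V ⊆ f '' U := by
  have hclosed : IsClosed (f '' closure U) := (hU.image_of_continuousOn hf).isClosed
  refine hV.subset_left_of_subset_union hopen hclosed.isOpen_compl
    (disjoint_compl_right_iff_subset.mpr (image_mono subset_closure)) (fun w hw => ?_) hne
  by_cases hw' : w ∈ f '' closure U
  · obtain ⟨x, hx, rfl⟩ := hw'
    by_cases hxU : x ∈ U
    · exact Or.inl (mem_image_of_mem f hxU)
    · exact absurd hw (hfr x ⟨hx, fun h => hxU (interior_subset h)⟩)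
  · exact Or.inr hw'

theorem IsPreconnected.forall_of_eventually {X : Type*} [TopologicalSpace X] {s : Set X}
    (hs : IsPreconnected s) {P : X → Prop} (hP : ∀ x ∈ s, P x → ∀ᶠ y in 𝓝 x, P y)
    (hnP : ∀ x ∈ s, ¬ P x → ∀ᶠ y in 𝓝 x, ¬ P y) {x₀ : X} (hx₀ : x₀ ∈ s) (h₀ : P x₀) :
    ∀ x ∈ s, P x := by
  intro x hx
  refine (hs.induction₂ (fun x y => P x ↔ P y) (fun x hx => ?_) (fun _ _ _ _ _ _ => Iff.trans)
    (fun _ _ _ _ => Iff.symm) hx₀ hx).mp h₀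
  refine Eventually.filter_mono nhdsWithin_le_nhds ?_
  by_cases h : P x
  · filter_upwards [hP x hx h] with y hy using iff_of_true h hy
  · filter_upwards [hnP x hx h] with y hy using iff_of_false h hy

theorem HasStrictDerivAt.exists_mem_nhds_injOn {𝕜 : Type*} [NontriviallyNormedField 𝕜]
    [CompleteSpace 𝕜] {f : 𝕜 → 𝕜} {f' a : 𝕜} (hf : HasStrictDerivAt f f' a) (hf' : f' ≠ 0) :
    ∃ V ∈ 𝓝 a, InjOn f V :=
  ⟨_, hf.eventually_left_inverse hf', fun _ hx _ hy hxy => hx.symm.trans (hxy ▸ hy)⟩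

theorem Complex.exists_ne_pow_eq {m : ℕ} (hm : 1 < m) {v : ℂ} (hv : v ≠ 0) {ρ : ℝ}
    (hρ : 0 ≤ ρ) (hvρ : ‖v‖ < ρ ^ m) :
    ∃ r ∈ ball (0 : ℂ) ρ, ∃ r' ∈ ball (0 : ℂ) ρ, r ≠ r' ∧ r ^ m = v ∧ r' ^ m = v := by
  have hm0 : m ≠ 0 := by omega
  have hζ := Complex.isPrimitiveRoot_exp m hm0
  set r := v ^ (m⁻¹ : ℂ)
  have hr : r ^ m = v := cpow_nat_inv_pow v hm0
  have hr0 : r ≠ 0 := by rintro h; simp [← hr, h, hm0] at hv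
  have hrρ : r ∈ ball (0 : ℂ) ρ := by
    rw [mem_ball_zero_iff]
    exact lt_of_pow_lt_pow_left₀ m hρ (by rwa [← norm_pow, hr])
  refine ⟨r, hrρ, r * Complex.exp (2 * Real.pi * I / m), ?_, fun h => hζ.ne_one hm ?_, hr,
    by rw [mul_pow, hr, hζ.pow_eq_one, mul_one]⟩
  · rwa [mem_ball_zero_iff, norm_mul, hζ.norm'_eq_one hm0, mul_one, ← mem_ball_zero_iff]
  · exact (mul_eq_left₀ hr0).mp h.symm

namespace Polynomial

variable {p : ℂ[X]} {U : Set ℂ}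

theorem not_eventually_eval_eq (hp : 0 < p.natDegree) (z : ℂ) :
    ¬ ∀ᶠ y in 𝓝 z, p.eval y = p.eval z := fun h => by
  have h' := (AnalyticOnNhd.eval_polynomial (𝕜 := ℂ) p).eqOn_of_preconnected_of_eventuallyEq
    analyticOnNhd_const isPreconnected_univ (mem_univ z) h
  have : p = C (p.eval z) := Polynomial.funext fun y => by simpa using h' (mem_univ y)
  rw [this, natDegree_C] at hp
  exact hp.false

theorem isOpenMap_eval (hp : 0 < p.natDegree) : IsOpenMap (fun z : ℂ => p.eval z) :=
  IsOpenMap.of_nhds_le fun z =>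
    (AnalyticOnNhd.eval_polynomial (𝕜 := ℂ) p z (mem_univ z)
      |>.eventually_constant_or_nhds_le_map_nhds).resolve_left (not_eventually_eval_eq hp z)

theorem norm_eval_lt_of_forall_mem_frontier (hp : 0 < p.natDegree) {t : ℝ} (hU : IsOpen U)
    (hUb : IsBounded U) (hfr : ∀ z ∈ frontier U, ‖p.eval z‖ ≤ t) {z : ℂ} (hz : z ∈ U) :
    ‖p.eval z‖ < t := by
  have hle : ∀ y ∈ closure U, ‖p.eval y‖ ≤ t := fun y hy =>
    Complex.norm_le_of_forall_mem_frontier_norm_le hUb p.differentiable.diffContOnCl hfr hy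
  refine (hle z (subset_closure hz)).lt_of_ne fun heq => not_eventually_eval_eq hp z ?_
  refine Complex.eventually_eq_of_isLocalMax_norm
    (Eventually.of_forall fun y => p.differentiableAt) ?_
  filter_upwards [hU.mem_nhds hz] with y hy
  simpa [heq] using hle y (subset_closure hy)

theorem exists_hasStrictDerivAt_pow_eq_eval {q : ℂ[X]} {z : ℂ} (hq : q ≠ 0) (hz : q.IsRoot z) :
    ∃ F : ℂ → ℂ, ∃ F' ≠ 0, HasStrictDerivAt F F' z ∧ F z = 0 ∧
      ∀ y, F y ^ q.rootMultiplicity z = q.eval y := by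
  set m := q.rootMultiplicity z
  have hm : m ≠ 0 := ((rootMultiplicity_pos hq).mpr hz).ne'
  set g := q /ₘ (X - C z) ^ m
  set c := g.eval z
  have hc : c ≠ 0 := eval_divByMonic_pow_rootMultiplicity_ne_zero z hq
  -- `g / c` is close to `1`, where the principal branch of `· ^ (1 / m)` is differentiable
  set E : ℂ → ℂ := fun y => c ^ (m⁻¹ : ℂ) * (g.eval y / c) ^ (m⁻¹ : ℂ)
  have hE : ∀ y, E y ^ m = g.eval y := fun y => by
    simp only [E, mul_pow, Complex.cpow_nat_inv_pow _ hm]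
    field_simp
  have hEz : E z ≠ 0 := by simp [E, c, hc]
  obtain ⟨E', hE'⟩ : ∃ E', HasStrictDerivAt E E' z :=
    ⟨_, (((g.hasStrictDerivAt z).div_const c).cpow_const (by simp [c, div_self hc])).const_mul _⟩
  refine ⟨fun y => (y - z) * E y, E z, hEz, ?_, by simp, fun y => ?_⟩
  · have hlin : HasStrictDerivAt (fun y => y - z) 1 z := (hasStrictDerivAt_id z).sub_const z
    have := hlin.mul hE'
    rwa [one_mul, sub_self, zero_mul, add_zero] at this
  · conv_rhs => rw [← pow_mul_divByMonic_rootMultiplicity_eq q z]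
    simp [mul_pow, hE, g, m]

theorem eventually_exists_ne_eval_eq_of_eval_derivative_eq_zero (hp : 0 < p.natDegree) {z : ℂ}
    (hz : p.derivative.eval z = 0) {V : Set ℂ} (hV : V ∈ 𝓝 z) :
    ∀ᶠ w in 𝓝[≠] p.eval z, ∃ a ∈ V, ∃ b ∈ V, a ≠ b ∧ p.eval a = w ∧ p.eval b = w := by
  set q := p - C (p.eval z)
  have hq : q ≠ 0 := fun h => by
    simpa [q, h, hp.ne'] using congrArg natDegree (sub_eq_zero.mp h)
  have hqz : q.IsRoot z := by simp [q]
  have hq_eval : ∀ y, q.eval y = p.eval y - p.eval z := fun y => by simp [q]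
  have hm : 1 < q.rootMultiplicity z :=
    (one_lt_rootMultiplicity_iff_isRoot hq).mpr ⟨hqz, by simpa [q] using hz⟩
  obtain ⟨F, F', hF', hF, hFz, hFq⟩ := exists_hasStrictDerivAt_pow_eq_eval hq hqz
  have hFV : F '' V ∈ 𝓝 0 := hFz ▸ hF.map_nhds_eq hF' ▸ image_mem_map hV
  obtain ⟨ρ, hρ, hρV⟩ := Metric.mem_nhds_iff.mp hFV
  filter_upwards [nhdsWithin_le_nhds (ball_mem_nhds _ (pow_pos hρ (q.rootMultiplicity z))),
    self_mem_nhdsWithin] with w hwρ hwz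
  obtain ⟨r, hr, r', hr', hrr', hrw, hr'w⟩ := Complex.exists_ne_pow_eq hm
    (sub_ne_zero.mpr hwz) hρ.le (by rwa [← dist_eq_norm])
  obtain ⟨a, ha, rfl⟩ := hρV hr
  obtain ⟨b, hb, rfl⟩ := hρV hr'
  refine ⟨a, ha, b, hb, fun h => hrr' (h ▸ rfl), ?_, ?_⟩
  · linear_combination hrw - hFq a - hq_eval a
  · linear_combination hr'w - hFq b - hq_eval b

def IsSimpleValueOn (p : ℂ[X]) (U : Set ℂ) (w : ℂ) : Prop :=
  ∃ a ∈ U, p.eval a = w ∧ p.derivative.eval a ≠ 0 ∧ ∀ b ∈ U, p.eval b = w → b = a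

theorem not_isSimpleValueOn_of_ne {w a b : ℂ} (ha : a ∈ U) (hb : b ∈ U) (hab : a ≠ b)
    (haw : p.eval a = w) (hbw : p.eval b = w) : ¬ p.IsSimpleValueOn U w :=
  fun ⟨_, _, _, _, huniq⟩ => hab ((huniq a ha haw).trans (huniq b hb hbw).symm)

theorem isSimpleValueOn_zero_of_card_filter_roots_eq_one [DecidablePred (· ∈ U)]
    (h : (p.roots.filter (· ∈ U)).card = 1) : p.IsSimpleValueOn U 0 := by
  obtain ⟨a, ha⟩ := Multiset.card_eq_one.mp h
  have haU : a ∈ p.roots.filter (· ∈ U) := ha ▸ Multiset.mem_singleton_self a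
  have hp : p ≠ 0 := ne_zero_of_mem_roots (Multiset.mem_of_mem_filter haU)
  have hroot : p.IsRoot a := (mem_roots hp).mp (Multiset.mem_of_mem_filter haU)
  refine ⟨a, (Multiset.mem_filter.mp haU).2, hroot, fun ha' => ?_, fun b hb hba => ?_⟩
  · have hmult : p.rootMultiplicity a = 1 := by
      rw [← count_roots, ← Multiset.count_filter_of_pos (p := (· ∈ U))
        (Multiset.mem_filter.mp haU).2, ha, Multiset.count_singleton_self]
    exact absurd ((one_lt_rootMultiplicity_iff_isRoot hp).mpr ⟨hroot, ha'⟩) (by omega)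
  · have : b ∈ p.roots.filter (· ∈ U) := Multiset.mem_filter.mpr ⟨(mem_roots hp).mpr hba, hb⟩
    rwa [ha, Multiset.mem_singleton] at this

theorem IsSimpleValueOn.eventually {w : ℂ} (hw : p.IsSimpleValueOn U w) (hU : IsOpen U)
    (hK : IsCompact (closure U)) (hfr : ∀ z ∈ frontier U, p.eval z ≠ w) :
    ∀ᶠ w' in 𝓝 w, p.IsSimpleValueOn U w' := by
  obtain ⟨a, haU, rfl, ha', huniq⟩ := hw
  obtain ⟨V, hV, hinj⟩ := (p.hasStrictDerivAt a).exists_mem_nhds_injOn ha'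
  have hreg : ∀ᶠ y in 𝓝 a, p.derivative.eval y ≠ 0 :=
    p.derivative.continuous.continuousAt.eventually_ne ha'
  obtain ⟨ε, hε, hball⟩ :=
    Metric.mem_nhds_iff.mp (inter_mem (inter_mem (hU.mem_nhds haU) hV) hreg)
  have hfar : ∀ᶠ w' in 𝓝 (p.eval a), w' ∉ (fun y => p.eval y) '' (closure U \ ball a ε) := by
    refine ((hK.diff isOpen_ball).image p.continuous).isClosed.isOpen_compl.mem_nhds ?_
    rintro ⟨y, ⟨hy, hyε⟩, hya⟩
    by_cases hyU : y ∈ U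
    · exact hyε (huniq y hyU hya ▸ mem_ball_self hε)
    · exact hfr y ⟨hy, fun h => hyU (interior_subset h)⟩ hya
  have hnear : (fun y => p.eval y) '' ball a ε ∈ 𝓝 (p.eval a) :=
    (p.hasStrictDerivAt a).map_nhds_eq ha' ▸ image_mem_map (ball_mem_nhds a hε)
  filter_upwards [hfar, hnear] with w' hfar' ⟨b, hb, hbw⟩
  subst hbw
  refine ⟨b, (hball hb).1.1, rfl, (hball hb).2, fun c hc hcb => ?_⟩
  have hcε : c ∈ ball a ε := by
    by_contra h
    exact hfar' ⟨c, ⟨subset_closure hc, h⟩, hcb⟩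
  exact hinj (hball hcε).1.2 (hball hb).1.2 hcb

theorem eventually_not_isSimpleValueOn (hp : 0 < p.natDegree) (hU : IsOpen U) {w : ℂ}
    (hw : ¬ p.IsSimpleValueOn U w) (hwU : w ∈ (fun z => p.eval z) '' U) :
    ∀ᶠ w' in 𝓝 w, ¬ p.IsSimpleValueOn U w' := by
  obtain ⟨a, haU, rfl⟩ := hwU
  suffices h : ∀ᶠ w' in 𝓝[≠] p.eval a,
      ∃ b ∈ U, ∃ c ∈ U, b ≠ c ∧ p.eval b = w' ∧ p.eval c = w' by
    filter_upwards [eventually_nhdsWithin_iff.mp h] with w' hw'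
    rcases eq_or_ne w' (p.eval a) with rfl | hne
    · exact hw
    · obtain ⟨b, hb, c, hc, hbc, hbw, hcw⟩ := hw' hne
      exact not_isSimpleValueOn_of_ne hb hc hbc hbw hcw
  by_cases ha' : p.derivative.eval a = 0
  · exact eventually_exists_ne_eval_eq_of_eval_derivative_eq_zero hp ha' (hU.mem_nhds haU)
  obtain ⟨b, hbU, hba, hab⟩ : ∃ b ∈ U, p.eval b = p.eval a ∧ b ≠ a := by
    by_contra! h
    exact hw ⟨a, haU, rfl, ha', h⟩
  obtain ⟨Va, Vb, hVa, hVb, hdisj⟩ := t2_separation_nhds hab.symm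
  have himage : ∀ {c}, c ∈ U → ∀ V ∈ 𝓝 c, (fun y => p.eval y) '' (U ∩ V) ∈ 𝓝 (p.eval c) :=
    fun hc V hV => (isOpenMap_eval hp).image_mem_nhds (inter_mem (hU.mem_nhds hc) hV)
  refine nhdsWithin_le_nhds ?_
  filter_upwards [himage haU Va hVa, hba ▸ himage hbU Vb hVb] with w' ⟨c, hc, hcw⟩ ⟨d, hd, hdw⟩
  exact ⟨c, hc.1, d, hd.1, hdisj.ne_of_mem hc.2 hd.2, hcw, hdw⟩

theorem bijOn_ball_of_forall_mem_frontier [DecidablePred (· ∈ U)] {t : ℝ} (hU : IsOpen U)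
    (hUb : IsBounded U) (hfr : ∀ z ∈ frontier U, ‖p.eval z‖ = t)
    (hone : (p.roots.filter (· ∈ U)).card = 1) :
    BijOn (fun z => p.eval z) U (ball 0 t) ∧ ∀ z ∈ U, p.derivative.eval z ≠ 0 := by
  have h₀ := isSimpleValueOn_zero_of_card_filter_roots_eq_one hone
  obtain ⟨a, haU, ha, ha', -⟩ := id h₀
  have hp : 0 < p.natDegree :=
    natDegree_pos_iff_degree_pos.mpr (degree_pos_of_root (fun h => by simp [h] at ha') ha)
  have hK : IsCompact (closure U) := hUb.isCompact_closure
  have hfr' : ∀ w ∈ ball (0 : ℂ) t, ∀ z ∈ frontier U, p.eval z ≠ w := fun w hw z hz h => by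
    rw [mem_ball_zero_iff, ← h, hfr z hz] at hw
    exact lt_irrefl t hw
  have hmaps : MapsTo (fun z => p.eval z) U (ball 0 t) := fun z hz => mem_ball_zero_iff.mpr
    (norm_eval_lt_of_forall_mem_frontier hp hU hUb (fun y hy => (hfr y hy).le) hz)
  have h0t : (0 : ℂ) ∈ ball 0 t := ha ▸ hmaps haU
  have hsurj : SurjOn (fun z => p.eval z) U (ball 0 t) :=
    (convex_ball 0 t).isPreconnected.subset_image_of_frontier p.continuous.continuousOn hK
      (isOpenMap_eval hp U hU) (fun z hz hzt => hfr' _ hzt z hz rfl) ⟨0, h0t, a, haU, ha⟩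
  have hsimple : ∀ w ∈ ball (0 : ℂ) t, p.IsSimpleValueOn U w :=
    (convex_ball 0 t).isPreconnected.forall_of_eventually
      (fun w hw h => h.eventually hU hK (hfr' w hw))
      (fun w hw h => eventually_not_isSimpleValueOn hp hU h (hsurj hw)) h0t h₀
  refine ⟨⟨hmaps, fun z₁ hz₁ z₂ hz₂ h => ?_, hsurj⟩, fun z hz => ?_⟩
  · obtain ⟨c, -, -, -, huniq⟩ := hsimple _ (hmaps hz₁)
    exact (huniq z₁ hz₁ rfl).trans (huniq z₂ hz₂ h.symm).symm
  · obtain ⟨c, -, -, hc', huniq⟩ := hsimple _ (hmaps hz)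
    exact huniq z hz rfl ▸ hc'

end Polynomial

open scoped Classical in
theorem univalent_on_petal_general (p : Polynomial ℂ) (t : ℝ) (γ U : Set ℂ) (z₀ : ℂ)
    (hγ : γ = connectedComponentIn {z : ℂ | ‖Polynomial.eval z p‖ = t} z₀)
    (w₀ : ℂ) (hU : U = connectedComponentIn γᶜ w₀)
    (hUbdd : Bornology.IsBounded U)
    (hone : (p.roots.filter fun z => z ∈ U).card = 1) :
    Set.BijOn (fun z => Polynomial.eval z p) U (Metric.ball (0 : ℂ) t) ∧
    ∀ z ∈ U, Polynomial.eval z p.derivative ≠ 0 := by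
  have hγ_closed : IsClosed γ :=
    hγ ▸ (isClosed_eq (by fun_prop) continuous_const).connectedComponentIn z₀
  have hfr : frontier U ⊆ γ := by
    simpa [hU] using hγ_closed.isOpen_compl.frontier_connectedComponentIn_subset w₀
  have hγL : γ ⊆ {z : ℂ | ‖p.eval z‖ = t} := hγ ▸ connectedComponentIn_subset _ _
  exact p.bijOn_ball_of_forall_mem_frontier (hU ▸ hγ_closed.isOpen_compl.connectedComponentIn)
    hUbdd (fun z hz => hγL (hfr hz)) hone

open scoped Classical in
/-- if `γ` is a connected component of the lemniscate `{z : |p(z)| = t}`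
(`t > 0`, `p` nonconstant) which is a Jordan curve, and `U` is a bounded connected
component of its complement, and `p` has exactly one zero in `U` counted with
multiplicity, then `p` maps `U` bijectively onto the open disk of radius `t` centered at
`0`; in particular `p'` has no zeros in `U`. -/
theorem univalent_on_petal (p : Polynomial ℂ) (hp : 0 < p.natDegree)
    (t : ℝ) (ht : 0 < t) (γ U : Set ℂ) (z₀ : ℂ)
    (hz₀ : ‖Polynomial.eval z₀ p‖ = t)
    (hγ : γ = connectedComponentIn {z : ℂ | ‖Polynomial.eval z p‖ = t} z₀)
    (hJordan : ∃ φ : Circle → ℂ, Continuous φ ∧ Function.Injective φ ∧ Set.range φ = γ)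
    (w₀ : ℂ) (hw₀ : w₀ ∈ γᶜ) (hU : U = connectedComponentIn γᶜ w₀)
    (hUbdd : Bornology.IsBounded U)
    (hone : (p.roots.filter fun z => z ∈ U).card = 1) :
    Set.BijOn (fun z => Polynomial.eval z p) U (Metric.ball (0 : ℂ) t) ∧
    ∀ z ∈ U, Polynomial.eval z p.derivative ≠ 0 :=
  univalent_on_petal_general p t γ U z₀ hγ w₀ hU hUbdd hone
end

section
/- Fix Δ ∈ (0, 1/4), r > 0, and K > 0. Let μ be a probability measure on ℂ whose density with respect to Lebesgue measure is bounded above by (K/π)(1 + |z|²)^{−2} (i.e., μ has density at most K with respect to the uniform measure on the Riemann sphere in the coordinate centered at infinity). Let ξ, ξ_1, …, ξ_{N−1} be i.i.d. samples from μ. Then there is a constant C = C(K, r, Δ) such that for all N ≥ 2: P( |ξ| ≤ N^Δ and |ξ − ξ_j| > 4r|ξ|/N for all j = 1,…,N−1 ) ≥ 1 − C·(N^{−2Δ} + N^{−1+2Δ}). In particular P(|ξ| > N^Δ) ≤ C·N^{−2Δ}. -/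
/-!
The density of `μ` is at most `K / π`, so a disc of radius `ρ` has `μ`-mass at most `K ρ²`; it is
also at most `(K / π) ‖z‖⁻⁴`, which integrates in polar coordinates over `‖z‖ > R` to the tail bound
`μ {‖z‖ > R} ≤ K R⁻²`. The isolation event fails only if `‖ξ‖ > N ^ Δ` or if some `ξ_j` lands in the
disc of radius `4 r N ^ Δ / N` around `ξ`; by independence each of these `N - 1` events has
probability at most `K (4 r N ^ Δ / N)²`, and a union bound gives the estimate with
`C = K + 16 K r²`.
-/

open MeasureTheory Real Set Metric
open scoped NNReal ENNReal

theorem withDensity_closedBall_le {f : ℂ → ℝ≥0∞} {K : ℝ} (hf : ∀ z, f z ≤ ENNReal.ofReal (K / π))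
    (c : ℂ) {ρ : ℝ} (hρ : 0 ≤ ρ) :
    volume.withDensity f (closedBall c ρ) ≤ ENNReal.ofReal (K * ρ ^ 2) := by
  rw [withDensity_apply _ measurableSet_closedBall]
  calc ∫⁻ z in closedBall c ρ, f z ≤ ∫⁻ _ in closedBall c ρ, ENNReal.ofReal (K / π) :=
        setLIntegral_mono measurable_const fun z _ => hf z
    _ = ENNReal.ofReal (K / π) * ENNReal.ofReal (ρ ^ 2 * π) := by
        rw [setLIntegral_const, Complex.volume_closedBall, ← ENNReal.ofReal_pow hρ,
          ← ENNReal.ofReal_coe_nnreal, NNReal.coe_real_pi, ← ENNReal.ofReal_mul (by positivity)]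
    _ = ENNReal.ofReal (K * ρ ^ 2) := by
        rw [← ENNReal.ofReal_mul' (by positivity)]
        exact congrArg _ (by field_simp)

theorem setLIntegral_norm_rpow_neg_gt {s : ℝ} (hs : 2 < s) {R : ℝ} (hR : 0 < R) :
    ∫⁻ z in {z : ℂ | R < ‖z‖}, ENNReal.ofReal (‖z‖ ^ (-s)) =
      ENNReal.ofReal (2 * π * R ^ (2 - s) / (s - 2)) := by
  have hmeas : MeasurableSet {z : ℂ | R < ‖z‖} := measurableSet_lt measurable_const measurable_norm
  have hmeas' : MeasurableSet (Ioi R ×ˢ univ : Set (ℝ × ℝ)) := measurableSet_Ioi.prod .univ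
  have polar : ∀ p ∈ polarCoord.target,
      ENNReal.ofReal p.1 • {z : ℂ | R < ‖z‖}.indicator (fun z => ENNReal.ofReal (‖z‖ ^ (-s)))
        (Complex.polarCoord.symm p) =
      (Ioi R ×ˢ univ).indicator (fun p => ENNReal.ofReal (p.1 ^ (1 - s))) p := by
    rintro p ⟨hp : 0 < p.1, -⟩
    have hnorm : ‖Complex.polarCoord.symm p‖ = p.1 := by
      rw [Complex.norm_polarCoord_symm, abs_of_pos hp]
    simp only [indicator_apply, mem_ofPred_eq, hnorm, mem_prod, mem_Ioi, mem_univ, and_true]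
    split_ifs
    · rw [smul_eq_mul, ← ENNReal.ofReal_mul hp.le, sub_eq_add_neg, Real.rpow_add hp, Real.rpow_one]
    · rw [smul_zero]
  calc ∫⁻ z in {z : ℂ | R < ‖z‖}, ENNReal.ofReal (‖z‖ ^ (-s))
      = ∫⁻ p in Ioi R ×ˢ Ioo (-π) π, ENNReal.ofReal (p.1 ^ (1 - s)) := by
        rw [← lintegral_indicator hmeas, ← Complex.lintegral_comp_polarCoord_symm,
          setLIntegral_congr_fun polarCoord.open_target.measurableSet polar,
          lintegral_indicator hmeas', Measure.restrict_restrict hmeas', polarCoord_target,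
          prod_inter_prod, Ioi_inter_Ioi, univ_inter, max_eq_left hR.le]
    _ = (∫⁻ t in Ioi R, ENNReal.ofReal (t ^ (1 - s))) * ENNReal.ofReal (π - -π) := by
        rw [Measure.volume_eq_prod, setLIntegral_prod _ (by fun_prop)]
        simp_rw [setLIntegral_const, Real.volume_Ioo]
        exact lintegral_mul_const _ (by fun_prop)
    _ = ENNReal.ofReal (R ^ (2 - s) / (s - 2)) * ENNReal.ofReal (π - -π) := by
        rw [← ofReal_integral_eq_lintegral_ofReal (integrableOn_Ioi_rpow_of_lt (by linarith) hR)
          (ae_restrict_of_forall_mem measurableSet_Ioi fun x hx => rpow_nonneg (hR.trans hx).le _),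
          integral_Ioi_rpow_of_lt (by linarith) hR, show 1 - s + 1 = 2 - s by ring, neg_div,
          ← div_neg, neg_sub]
    _ = ENNReal.ofReal (2 * π * R ^ (2 - s) / (s - 2)) := by
        rw [← ENNReal.ofReal_mul' (by linarith [pi_pos])]
        congr 1
        ring

theorem withDensity_norm_gt_le {f : ℂ → ℝ≥0∞} {K : ℝ} (hK : 0 ≤ K)
    (hf : ∀ z, f z ≤ ENNReal.ofReal (K / π / (1 + ‖z‖ ^ 2) ^ 2)) {R : ℝ} (hR : 0 < R) :
    volume.withDensity f {z | R < ‖z‖} ≤ ENNReal.ofReal (K * R ^ (-2 : ℝ)) := by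
  have hmeas : MeasurableSet {z : ℂ | R < ‖z‖} := measurableSet_lt measurable_const measurable_norm
  have hf_le : ∀ z ∈ {z : ℂ | R < ‖z‖},
      f z ≤ ENNReal.ofReal (K / π) * ENNReal.ofReal (‖z‖ ^ (-4 : ℝ)) := by
    intro z (hz : R < ‖z‖)
    have hz0 : 0 < ‖z‖ := hR.trans hz
    refine (hf z).trans ?_
    rw [← ENNReal.ofReal_mul' (by positivity), Real.rpow_neg hz0.le, ← div_eq_mul_inv]
    refine ENNReal.ofReal_le_ofReal (div_le_div_of_nonneg_left (by positivity) (by positivity) ?_)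
    rw [Real.rpow_ofNat]
    nlinarith [sq_nonneg ‖z‖]
  calc volume.withDensity f {z | R < ‖z‖}
      ≤ ∫⁻ z in {z : ℂ | R < ‖z‖}, ENNReal.ofReal (K / π) * ENNReal.ofReal (‖z‖ ^ (-4 : ℝ)) := by
        rw [withDensity_apply _ hmeas]
        exact setLIntegral_mono (by fun_prop) hf_le
    _ = ENNReal.ofReal (K * R ^ (-2 : ℝ)) := by
        rw [lintegral_const_mul _ (by fun_prop), setLIntegral_norm_rpow_neg_gt (by norm_num) hR,
          ← ENNReal.ofReal_mul (by positivity)]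
        congr 1
        field_simp
        norm_num

theorem measure_prod_dist_le {α : Type*} [PseudoMetricSpace α] [MeasurableSpace α]
    [OpensMeasurableSpace α] [SecondCountableTopology α] {μ ν : Measure α}
    [IsProbabilityMeasure μ] [SFinite ν] {ρ : ℝ} {ε : ℝ≥0∞} (h : ∀ c, ν (closedBall c ρ) ≤ ε) :
    μ.prod ν {p | dist p.2 p.1 ≤ ρ} ≤ ε := by
  rw [Measure.prod_apply (measurableSet_le (by fun_prop) measurable_const)]
  calc ∫⁻ x, ν (Prod.mk x ⁻¹' {p | dist p.2 p.1 ≤ ρ}) ∂μ ≤ ∫⁻ _, ε ∂μ := lintegral_mono fun x => h x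
    _ = ε := by simp

theorem measure_prod_pi_exists_dist_le {α ι : Type*} [PseudoMetricSpace α] [MeasurableSpace α]
    [OpensMeasurableSpace α] [SecondCountableTopology α] [Fintype ι] {μ : Measure α}
    [IsProbabilityMeasure μ] {ρ : ℝ} {ε : ℝ≥0∞} (h : ∀ c, μ (closedBall c ρ) ≤ ε) :
    μ.prod (Measure.pi fun _ : ι => μ) {ω | ∃ j, dist (ω.2 j) ω.1 ≤ ρ} ≤ Fintype.card ι * ε := by
  have hpair (j : ι) : μ.prod (Measure.pi fun _ : ι => μ) {ω | dist (ω.2 j) ω.1 ≤ ρ} ≤ ε := by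
    have hmp := (MeasurePreserving.id μ).prod (measurePreserving_eval (fun _ : ι => μ) j)
    exact (hmp.measure_preimage (measurableSet_le (by fun_prop) measurable_const).nullMeasurableSet
      ).trans_le (measure_prod_dist_le h)
  rw [ofPred_exists]
  calc μ.prod (Measure.pi fun _ : ι => μ) (⋃ j, {ω | dist (ω.2 j) ω.1 ≤ ρ})
      ≤ ∑ j, μ.prod (Measure.pi fun _ : ι => μ) {ω | dist (ω.2 j) ω.1 ≤ ρ} :=
        measure_iUnion_fintype_le _ _
    _ ≤ Fintype.card ι * ε := by
        rw [← Finset.card_univ, ← nsmul_eq_mul]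
        exact Finset.sum_le_card_nsmul _ _ _ fun j _ => hpair j

theorem compl_setOf_norm_le_and_lt_subset {E ι : Type*} [SeminormedAddCommGroup E]
    {t : ℝ → ℝ} (ht : Monotone t) (R : ℝ) :
    {ω : E × (ι → E) | ‖ω.1‖ ≤ R ∧ ∀ j, t ‖ω.1‖ < ‖ω.1 - ω.2 j‖}ᶜ ⊆
      Prod.fst ⁻¹' {ξ | R < ‖ξ‖} ∪ {ω | ∃ j, dist (ω.2 j) ω.1 ≤ t R} := by
  intro ω hω
  simp only [mem_compl_iff, mem_ofPred_eq, not_and, not_forall, not_lt] at hω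
  by_cases hξ : ‖ω.1‖ ≤ R
  · obtain ⟨j, hj⟩ := hω hξ
    exact Or.inr ⟨j, by rw [dist_comm, dist_eq_norm]; exact hj.trans (ht hξ)⟩
  · exact Or.inl (lt_of_not_ge hξ)

theorem measure_compl_isolated_le {E ι : Type*} [NormedAddCommGroup E] [MeasurableSpace E]
    [OpensMeasurableSpace E] [SecondCountableTopology E] [Fintype ι] {μ : Measure E}
    [IsProbabilityMeasure μ] {t : ℝ → ℝ} (ht : Monotone t) {R : ℝ} {δ ε : ℝ≥0∞}
    (htail : μ {ξ | R < ‖ξ‖} ≤ δ) (hball : ∀ c, μ (closedBall c (t R)) ≤ ε) :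
    μ.prod (Measure.pi fun _ : ι => μ)
        {ω | ‖ω.1‖ ≤ R ∧ ∀ j, t ‖ω.1‖ < ‖ω.1 - ω.2 j‖}ᶜ ≤ δ + Fintype.card ι * ε := by
  refine (measure_mono (compl_setOf_norm_le_and_lt_subset ht R)).trans
    ((measure_union_le _ _).trans (add_le_add ?_ (measure_prod_pi_exists_dist_le hball)))
  rwa [measurePreserving_fst.measure_preimage
    (measurableSet_lt measurable_const measurable_norm).nullMeasurableSet]

theorem ofReal_one_sub_le_of_measure_compl_le {α : Type*} [MeasurableSpace α] {μ : Measure α}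
    [IsProbabilityMeasure μ] {s : Set α} {a : ℝ} (ha : 0 ≤ a) (h : μ sᶜ ≤ ENNReal.ofReal a) :
    ENNReal.ofReal (1 - a) ≤ μ s := by
  rw [ENNReal.ofReal_sub _ ha, ENNReal.ofReal_one]
  calc 1 - ENNReal.ofReal a ≤ 1 - μ sᶜ := tsub_le_tsub_left h 1
    _ ≤ μ s := tsub_le_iff_right.mpr (measure_univ (μ := μ) ▸ measure_univ_le_add_compl s)

theorem sub_one_mul_rpow_div_sq_le {N : ℝ} (hN : 1 ≤ N) (Δ : ℝ) :
    (N - 1) * (N ^ Δ / N) ^ 2 ≤ N ^ (-1 + 2 * Δ) := by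
  have hN0 : 0 < N := by linarith
  rw [Real.rpow_add hN0, Real.rpow_neg_one, mul_comm 2 Δ, Real.rpow_mul hN0.le, Real.rpow_two,
    div_pow, ← div_eq_inv_mul, mul_div_assoc', div_le_div_iff₀ (by positivity) hN0]
  nlinarith [sq_nonneg (N ^ Δ)]

theorem zero_isolation_probability_general (Δ : ℝ)
    (r : ℝ) (hr : 0 < r) (K : ℝ) (hK : 0 < K)
    (f : ℂ → ℝ≥0∞)
    (hfbd : ∀ z : ℂ, f z ≤ ENNReal.ofReal (K / Real.pi / (1 + ‖z‖ ^ 2) ^ 2))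
    (μ : Measure ℂ) [IsProbabilityMeasure μ] (hμ : μ = volume.withDensity f) :
    ∃ C : ℝ, 0 < C ∧ ∀ N : ℕ, 2 ≤ N →
      (ENNReal.ofReal (1 - C * ((N : ℝ) ^ (-2 * Δ) + (N : ℝ) ^ (-1 + 2 * Δ))) ≤
        (μ.prod (Measure.pi fun _ : Fin (N - 1) => μ))
          {ω : ℂ × (Fin (N - 1) → ℂ) |
            ‖ω.1‖ ≤ (N : ℝ) ^ Δ ∧
            ∀ j : Fin (N - 1),
              4 * r * ‖ω.1‖ / N < ‖ω.1 - ω.2 j‖}) ∧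
      μ {ξ : ℂ | (N : ℝ) ^ Δ < ‖ξ‖} ≤
        ENNReal.ofReal (C * (N : ℝ) ^ (-2 * Δ)) := by
  refine ⟨K + 16 * K * r ^ 2, by positivity, fun N hN => ?_⟩
  have hN1 : (1 : ℝ) ≤ N := by exact_mod_cast (by omega : 1 ≤ N)
  have hN0 : (0 : ℝ) < N := by linarith
  have htail : μ {ξ : ℂ | (N : ℝ) ^ Δ < ‖ξ‖} ≤ ENNReal.ofReal (K * (N : ℝ) ^ (-2 * Δ)) := by
    rw [hμ, mul_comm (-2), Real.rpow_mul hN0.le]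
    exact withDensity_norm_gt_le hK.le hfbd (Real.rpow_pos_of_pos hN0 Δ)
  have hball (c : ℂ) (ρ : ℝ) (hρ : 0 ≤ ρ) : μ (closedBall c ρ) ≤ ENNReal.ofReal (K * ρ ^ 2) :=
    hμ ▸ withDensity_closedBall_le (fun z => (hfbd z).trans (ENNReal.ofReal_le_ofReal
      (div_le_self (by positivity) (by nlinarith [sq_nonneg ‖z‖])))) c hρ
  have hclose : ((N - 1 : ℕ) : ℝ) * (K * (4 * r * (N : ℝ) ^ Δ / N) ^ 2) ≤
      16 * K * r ^ 2 * (N : ℝ) ^ (-1 + 2 * Δ) := by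
    rw [Nat.cast_sub (by omega), Nat.cast_one]
    calc _ = 16 * K * r ^ 2 * ((N - 1) * ((N : ℝ) ^ Δ / N) ^ 2) := by ring
      _ ≤ _ := by gcongr; exact sub_one_mul_rpow_div_sq_le hN1 Δ
  have ha : 0 ≤ (N : ℝ) ^ (-2 * Δ) := by positivity
  have hb : 0 ≤ (N : ℝ) ^ (-1 + 2 * Δ) := by positivity
  refine ⟨ofReal_one_sub_le_of_measure_compl_le (by positivity) ?_,
    htail.trans (ENNReal.ofReal_le_ofReal
      (mul_le_mul_of_nonneg_right (le_add_of_nonneg_right (by positivity)) ha))⟩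
  refine (measure_compl_isolated_le (t := fun x => 4 * r * x / N)
    (fun x y hxy => by dsimp only; gcongr) htail fun c => hball c _ (by positivity)).trans ?_
  rw [Fintype.card_fin, ← ENNReal.ofReal_natCast, ← ENNReal.ofReal_mul (by positivity),
    ← ENNReal.ofReal_add (by positivity) (by positivity)]
  refine ENNReal.ofReal_le_ofReal ?_
  nlinarith [mul_nonneg hK.le hb, mul_nonneg (by positivity : (0 : ℝ) ≤ 16 * K * r ^ 2) ha]

/-- fix `Δ ∈ (0,1/4)`, `r > 0`, `K > 0`.  Let `μ` be a probability measure
on `ℂ` with Lebesgue density bounded by `(K/π)(1+|z|²)⁻²` (density at most `K` with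
respect to the uniform measure on the Riemann sphere, in the coordinate centered at
infinity).  For i.i.d. samples `ξ, ξ₁, …, ξ_{N−1}` from `μ`, with probability at least
`1 − C·(N^{−2Δ} + N^{−1+2Δ})` one has both `|ξ| ≤ N^Δ` and `|ξ − ξ_j| > 4r|ξ|/N` for all
`j`; in particular `P(|ξ| > N^Δ) ≤ C·N^{−2Δ}`. -/
theorem zero_isolation_probability (Δ : ℝ) (hΔ0 : 0 < Δ) (hΔ : Δ < 1 / 4)
    (r : ℝ) (hr : 0 < r) (K : ℝ) (hK : 0 < K)
    (f : ℂ → ℝ≥0∞) (hf : Measurable f)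
    (hfbd : ∀ z : ℂ, f z ≤ ENNReal.ofReal (K / Real.pi / (1 + ‖z‖ ^ 2) ^ 2))
    (μ : Measure ℂ) [IsProbabilityMeasure μ] (hμ : μ = volume.withDensity f) :
    ∃ C : ℝ, 0 < C ∧ ∀ N : ℕ, 2 ≤ N →
      (ENNReal.ofReal (1 - C * ((N : ℝ) ^ (-2 * Δ) + (N : ℝ) ^ (-1 + 2 * Δ))) ≤
        (μ.prod (Measure.pi fun _ : Fin (N - 1) => μ))
          {ω : ℂ × (Fin (N - 1) → ℂ) |
            ‖ω.1‖ ≤ (N : ℝ) ^ Δ ∧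
            ∀ j : Fin (N - 1),
              4 * r * ‖ω.1‖ / N < ‖ω.1 - ω.2 j‖}) ∧
      μ {ξ : ℂ | (N : ℝ) ^ Δ < ‖ξ‖} ≤
        ENNReal.ofReal (C * (N : ℝ) ^ (-2 * Δ)) :=
  zero_isolation_probability_general Δ r hr K hK f hfbd μ hμ
end

section
/- Fix r > 0 large enough that |arg(1 + e^{iθ}/r)| < 1/10 for all θ ∈ [0, 2π], and fix γ ∈ (0, 1]. There exists N₀ such that for all N ≥ N₀, all real ξ > 0, all w ∈ ℂ with r·ξ/N ≤ |w − ξ| ≤ 4r·ξ/N, and all e ∈ ℂ with |e| ≤ N^{1−γ}/ξ, the complex number E = −N/w + 1/(w − ξ) + e is nonzero and its argument satisfies arg(E) ∈ (π − 1/5, π + 1/5) (taking arg with values in (0, 2π)). -/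
/-!
Put `s = N / ξ`. Then `E + s = -N (1/w - 1/ξ) + 1/(w - ξ) + e`, and for large `N` each of the
three terms is a small multiple of `s`: the first is at most `s/99` because `|w - ξ| ≤ ξ/100`,
the second at most `s/r < s/9`, and the third at most `s/100` because `N^(1-γ) = o(N)`.
The bound `r > 9` comes from the hypothesis on `r` at `θ = π/2`, which says `arctan (1/r) < 1/10`.
Hence `E` lies in the disc of radius `s/6` about `-s`, on which `arg (-E)` is less than
`arctan (1/5) < 1/5` in absolute value.
-/

open Filter
open scoped Real

namespace Real

lemma abs_arctan_lt {t ε : ℝ} (hε₀ : 0 < ε) (hε : ε < π / 2) (ht : |t| < tan ε) :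
    |arctan t| < ε := by
  obtain ⟨ht₁, ht₂⟩ := abs_lt.1 ht
  have hlo : arctan (-tan ε) = -ε := by rw [← tan_neg, arctan_tan (by linarith) (by linarith)]
  have hhi : arctan (tan ε) = ε := arctan_tan (by linarith) hε
  refine abs_lt.2 ⟨?_, ?_⟩
  · rw [← hlo]; exact arctan_lt_arctan_iff.2 ht₁
  · rw [← hhi]; exact arctan_lt_arctan_iff.2 ht₂

lemma tan_one_div_ten_lt : tan (1 / 10) < 1 / 9 := by
  have hsin := sin_lt (by norm_num : (0 : ℝ) < 1 / 10)
  have hcos := one_sub_sq_div_two_le_cos (x := 1 / 10)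
  rw [tan_eq_sin_div_cos, div_lt_iff₀ (by linarith)]
  linarith

end Real

namespace Complex

lemma arg_eq_arctan_of_re_pos {z : ℂ} (hz : 0 < z.re) : arg z = Real.arctan (z.im / z.re) := by
  have h := abs_lt.1 (abs_arg_lt_pi_div_two_iff.2 (Or.inl hz))
  rw [← tan_arg, Real.arctan_tan h.1 h.2]

lemma abs_arg_lt_of_abs_im_lt {z : ℂ} {ε : ℝ} (hre : 0 < z.re) (hε₀ : 0 < ε)
    (hε : ε < π / 2) (him : |z.im| < Real.tan ε * z.re) : |arg z| < ε := by
  rw [arg_eq_arctan_of_re_pos hre]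
  refine Real.abs_arctan_lt hε₀ hε ?_
  rwa [abs_div, abs_of_pos hre, div_lt_iff₀ hre]

lemma nine_lt_of_arg_one_add_I_div_lt {r : ℝ} (hr : 0 < r) (h : arg (1 + I / r) < 1 / 10) :
    9 < r := by
  have hre : (1 + I / r).re = 1 := by simp
  have him : (1 + I / r).im = 1 / r := by simp [div_ofReal_im]
  have hpi := Real.pi_gt_three
  rw [arg_eq_arctan_of_re_pos (by rw [hre]; exact one_pos), hre, him, div_one,
    ← Real.arctan_tan (by linarith) (by linarith : (1 / 10 : ℝ) < π / 2),
    Real.arctan_lt_arctan_iff] at h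
  have := h.trans Real.tan_one_div_ten_lt
  rw [div_lt_div_iff₀ hr (by norm_num)] at this
  linarith

lemma ite_arg_nonneg_eq_pi_add_arg_neg {z : ℂ} (hz : -z ∈ slitPlane) :
    (if 0 ≤ arg z then arg z else arg z + 2 * π) = π + arg (-z) := by
  rcases lt_or_ge z.im 0 with him | him
  · rw [if_neg (not_le.2 (arg_neg_iff.2 him)), arg_neg_eq_arg_add_pi_of_im_neg him]
    ring
  · have hsub : arg (-z) = arg z - π := by
      refine arg_neg_eq_arg_sub_pi_iff.2 ?_
      rcases him.lt_or_eq with him | him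
      · exact Or.inl him
      · refine Or.inr ⟨him.symm, ?_⟩
        rcases mem_slitPlane_iff.1 hz with h | h
        · simpa using h
        · simp [← him] at h
    rw [if_pos (arg_nonneg_iff.2 him), hsub]
    ring

lemma ite_arg_mem_Ioo_of_norm_add_lt {z : ℂ} {s : ℝ} (hs : 0 < s) (h : ‖z + s‖ < s / 6) :
    z ≠ 0 ∧ (if 0 ≤ arg z then arg z else arg z + 2 * π) ∈ Set.Ioo (π - 1 / 5) (π + 1 / 5) := by
  have hnorm : ‖-z - s‖ < s / 6 := by rwa [← norm_neg, neg_sub_left, neg_neg, add_comm]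
  have hre : 5 / 6 * s < (-z).re := by
    have := (abs_lt.1 ((abs_re_le_norm _).trans_lt hnorm)).1
    simp only [sub_re, ofReal_re] at this
    linarith
  have him : |(-z).im| < s / 6 := by simpa using (abs_im_le_norm _).trans_lt hnorm
  have hpi := Real.pi_gt_three
  have harg : |arg (-z)| < 1 / 5 := by
    refine abs_arg_lt_of_abs_im_lt (by linarith) (by norm_num) (by linarith) ?_
    have := Real.lt_tan (by norm_num : (0 : ℝ) < 1 / 5) (by linarith)
    nlinarith [mul_lt_mul_of_pos_right this (show 0 < (-z).re by linarith)]
  refine ⟨fun hz => by simp [hz] at hre; linarith, ?_⟩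
  rw [ite_arg_nonneg_eq_pi_add_arg_neg (mem_slitPlane_iff.2 (Or.inl (by linarith)))]
  obtain ⟨h₁, h₂⟩ := abs_lt.1 harg
  constructor <;> linarith

end Complex
lemma norm_inv_sub_inv_le {𝕜 : Type*} [NormedField 𝕜] {a b : 𝕜} {δ : ℝ} (hb : b ≠ 0)
    (hδ : δ < 1) (h : ‖a - b‖ ≤ δ * ‖b‖) : ‖a⁻¹ - b⁻¹‖ ≤ δ / ((1 - δ) * ‖b‖) := by
  have hb' : 0 < ‖b‖ := norm_pos_iff.2 hb
  have ha' : (1 - δ) * ‖b‖ ≤ ‖a‖ := by linarith [norm_sub_norm_le b a, norm_sub_rev a b]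
  have ha : a ≠ 0 := norm_pos_iff.1 (lt_of_lt_of_le (by nlinarith) ha')
  rw [inv_sub_inv ha hb, norm_div, norm_mul, norm_sub_rev,
    div_le_div_iff₀ (mul_pos (norm_pos_iff.2 ha) hb') (by nlinarith)]
  have hδ₀ : 0 ≤ δ := nonneg_of_mul_nonneg_left ((norm_nonneg _).trans h) hb'
  calc ‖a - b‖ * ((1 - δ) * ‖b‖) ≤ δ * ‖b‖ * ((1 - δ) * ‖b‖) := by gcongr
    _ ≤ δ * ‖b‖ * ‖a‖ := by gcongr
    _ = δ * (‖a‖ * ‖b‖) := by ring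

lemma norm_neg_div_add_one_div_sub_add_add_lt {n r ξ : ℝ} {w e : ℂ} (hr : 9 < r) (hξ : 0 < ξ)
    (hn : 400 * r ≤ n) (hw₁ : r * ξ / n ≤ ‖w - ξ‖) (hw₂ : ‖w - ξ‖ ≤ 4 * r * ξ / n)
    (he : ‖e‖ ≤ n / ξ / 100) :
    ‖-(n : ℂ) / w + 1 / (w - ξ) + e + ((n / ξ : ℝ) : ℂ)‖ < n / ξ / 6 := by
  have hn₀ : 0 < n := by linarith
  have hξ' : ‖(ξ : ℂ)‖ = ξ := by simp [hξ.le]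
  have hclose : ‖w - ξ‖ ≤ 1 / 100 * ‖(ξ : ℂ)‖ := by
    rw [hξ']
    refine hw₂.trans ((div_le_iff₀ hn₀).2 ?_)
    nlinarith
  have hfirst : ‖-(n : ℂ) * (w⁻¹ - (ξ : ℂ)⁻¹)‖ ≤ n / ξ / 99 := by
    have := norm_inv_sub_inv_le (by exact_mod_cast hξ.ne') (by norm_num) hclose
    rw [hξ'] at this
    rw [norm_mul, norm_neg, Complex.norm_real, Real.norm_of_nonneg hn₀.le]
    calc n * ‖w⁻¹ - (ξ : ℂ)⁻¹‖ ≤ n * (1 / 100 / ((1 - 1 / 100) * ξ)) := by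
          gcongr
      _ = n / ξ / 99 := by field_simp; norm_num
  have hsecond : ‖(w - ξ)⁻¹‖ ≤ n / ξ / 9 := by
    rw [norm_inv]
    calc ‖w - ξ‖⁻¹ ≤ (r * ξ / n)⁻¹ := inv_anti₀ (by positivity) hw₁
      _ = n / ξ / r := by field_simp
      _ ≤ n / ξ / 9 := by gcongr
  have hsplit : -(n : ℂ) / w + 1 / (w - ξ) + e + ((n / ξ : ℝ) : ℂ)
      = -(n : ℂ) * (w⁻¹ - (ξ : ℂ)⁻¹) + (w - ξ)⁻¹ + e := by
    push_cast; ring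
  rw [hsplit]
  have hs : 0 < n / ξ := by positivity
  calc _ ≤ ‖-(n : ℂ) * (w⁻¹ - (ξ : ℂ)⁻¹)‖ + ‖(w - ξ)⁻¹‖ + ‖e‖ := norm_add₃_le
    _ ≤ n / ξ / 99 + n / ξ / 9 + n / ξ / 100 := by gcongr
    _ < n / ξ / 6 := by linarith

lemma eventually_rpow_one_sub_le_mul {γ c : ℝ} (hγ : 0 < γ) (hc : 0 < c) :
    ∀ᶠ x : ℝ in atTop, x ^ (1 - γ) ≤ c * x := by
  filter_upwards [(tendsto_rpow_atTop hγ).eventually_ge_atTop c⁻¹, eventually_gt_atTop 0]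
    with x hx hx₀
  rw [Real.rpow_sub hx₀, Real.rpow_one, div_le_iff₀ (by positivity)]
  have : 1 ≤ c * x ^ γ := by rwa [inv_le_iff_one_le_mul₀' hc] at hx
  nlinarith

theorem field_argument_near_pi_general (r : ℝ) (hr : 0 < r)
    (hrarg : ∀ θ ∈ Set.Icc (0 : ℝ) (2 * Real.pi),
      |Complex.arg (1 + Complex.exp (θ * Complex.I) / r)| < 1 / 10)
    (γ : ℝ) (hγ0 : 0 < γ) :
    ∃ N₀ : ℕ, ∀ N : ℕ, N₀ ≤ N → ∀ ξ : ℝ, 0 < ξ → ∀ w : ℂ,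
      r * ξ / N ≤ ‖w - (ξ : ℂ)‖ →
      ‖w - (ξ : ℂ)‖ ≤ 4 * r * ξ / N →
      ∀ e : ℂ, ‖e‖ ≤ (N : ℝ) ^ (1 - γ) / ξ →
        -(N : ℂ) / w + 1 / (w - (ξ : ℂ)) + e ≠ 0 ∧
        (if 0 ≤ Complex.arg (-(N : ℂ) / w + 1 / (w - (ξ : ℂ)) + e) then
            Complex.arg (-(N : ℂ) / w + 1 / (w - (ξ : ℂ)) + e)
          else Complex.arg (-(N : ℂ) / w + 1 / (w - (ξ : ℂ)) + e) + 2 * Real.pi)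
          ∈ Set.Ioo (Real.pi - 1 / 5) (Real.pi + 1 / 5) := by
  have hr9 : 9 < r := by
    refine Complex.nine_lt_of_arg_one_add_I_div_lt hr (abs_lt.1 ?_).2
    have hpi := Real.pi_pos
    simpa [Complex.exp_pi_div_two_mul_I] using hrarg (π / 2) ⟨by positivity, by linarith⟩
  obtain ⟨N₀, hN₀⟩ := eventually_atTop.1 <| tendsto_natCast_atTop_atTop.eventually <|
    (eventually_ge_atTop (400 * r)).and
      (eventually_rpow_one_sub_le_mul hγ0 (by norm_num : (0 : ℝ) < 1 / 100))
  refine ⟨N₀, fun N hN ξ hξ w hw₁ hw₂ e he => ?_⟩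
  obtain ⟨hNr, hNγ⟩ := hN₀ N hN
  have hN : (0 : ℝ) < N := by linarith
  have he' : ‖e‖ ≤ N / ξ / 100 :=
    he.trans ((div_le_div_of_nonneg_right hNγ hξ.le).trans_eq (by ring))
  have key := norm_neg_div_add_one_div_sub_add_add_lt hr9 hξ hNr hw₁ hw₂ he'
  rw [Complex.ofReal_natCast] at key
  exact Complex.ite_arg_mem_Ioo_of_norm_add_lt (by positivity) key

/-- fix `r > 0` with `|arg(1 + e^{iθ}/r)| < 1/10` for all `θ ∈ [0,2π]`, and
`γ ∈ (0,1]`.  For all `N` large, all real `ξ > 0`, all `w` in the annulus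
`rξ/N ≤ |w − ξ| ≤ 4rξ/N`, and all perturbations `e` with `|e| ≤ N^{1−γ}/ξ`, the number
`E = −N/w + 1/(w − ξ) + e` is nonzero and its argument, taken with values in `(0, 2π)`,
lies in `(π − 1/5, π + 1/5)`. -/
theorem field_argument_near_pi (r : ℝ) (hr : 0 < r)
    (hrarg : ∀ θ ∈ Set.Icc (0 : ℝ) (2 * Real.pi),
      |Complex.arg (1 + Complex.exp (θ * Complex.I) / r)| < 1 / 10)
    (γ : ℝ) (hγ0 : 0 < γ) (hγ1 : γ ≤ 1) :
    ∃ N₀ : ℕ, ∀ N : ℕ, N₀ ≤ N → ∀ ξ : ℝ, 0 < ξ → ∀ w : ℂ,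
      r * ξ / N ≤ ‖w - (ξ : ℂ)‖ →
      ‖w - (ξ : ℂ)‖ ≤ 4 * r * ξ / N →
      ∀ e : ℂ, ‖e‖ ≤ (N : ℝ) ^ (1 - γ) / ξ →
        -(N : ℂ) / w + 1 / (w - (ξ : ℂ)) + e ≠ 0 ∧
        (if 0 ≤ Complex.arg (-(N : ℂ) / w + 1 / (w - (ξ : ℂ)) + e) then
            Complex.arg (-(N : ℂ) / w + 1 / (w - (ξ : ℂ)) + e)
          else Complex.arg (-(N : ℂ) / w + 1 / (w - (ξ : ℂ)) + e) + 2 * Real.pi)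
          ∈ Set.Ioo (Real.pi - 1 / 5) (Real.pi + 1 / 5) :=
  field_argument_near_pi_general r hr hrarg γ hγ0
end
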